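/- arXiv:2012.14779 — 6 statements merged into one kernel-verified Lean document; each statement's English description precedes it below -/
import Mathlib

section
/- The quasi-distance δ_Φ associated to Φ is a quasi-distance: there exists a constant K = K(n,s) ≥ 1 such that for all p₁, p₂, p₃ ∈ ℝ^{n+1}, δ_Φ(p₁,p₂) ≤ K ( min{δ_Φ(p₁,p₃), δ_Φ(p₃,p₁)} + min{δ_Φ(p₂,p₃), δ_Φ(p₃,p₂)} ). -/
open Set MeasureTheory
open scoped ENNReal

noncomputable section

/-- `h(z) = (s²/(1-s))|z|^{1/s}`. -/
def hFun (s z : ℝ) : ℝ := s ^ 2 / (1 - s) * |z| ^ (1 / s)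

/-- `h'(z) = (s/(1-s))|z|^{1/s-2} z` (with `h'(0)=0`). -/
def hDeriv (s z : ℝ) : ℝ := s / (1 - s) * |z| ^ (1 / s - 2) * z

/-- Monge–Ampère quasi-distance of `h`. -/
def deltaH (s z₀ z : ℝ) : ℝ := hFun s z - hFun s z₀ - hDeriv s z₀ * (z - z₀)

/-- Monge–Ampère quasi-distance of `φ(x)=|x|²/2` on `ℝⁿ`. -/
def deltaE (n : ℕ) (x₀ x : Fin n → ℝ) : ℝ := (∑ i, (x i - x₀ i) ^ 2) / 2

/-- Monge–Ampère quasi-distance of `Φ(x,z) = |x|²/2 + h(z)`. -/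
def deltaPhi (n : ℕ) (s : ℝ) (p q : (Fin n → ℝ) × ℝ) : ℝ :=
  deltaE n p.1 q.1 + deltaH s p.2 q.2

/-- Monge–Ampère section of `Φ` of radius `R` centered at `p`. -/
def sectPhi (n : ℕ) (s R : ℝ) (p : (Fin n → ℝ) × ℝ) : Set ((Fin n → ℝ) × ℝ) :=
  {q | deltaPhi n s p q < R}

/-- Monge–Ampère section of `h` of radius `R` centered at `z₀`. -/
def sectH (s R z₀ : ℝ) : Set ℝ := {z | deltaH s z₀ z < R}

/-- One-dimensional section of `t ↦ t²/2` of radius `R` centered at `t₀`. -/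
def sect1 (R t₀ : ℝ) : Set ℝ := {t | (t - t₀) ^ 2 / 2 < R}

/-- Monge–Ampère cube of radius `R` centered at `p`. -/
def cube (n : ℕ) (s R : ℝ) (p : (Fin n → ℝ) × ℝ) : Set ((Fin n → ℝ) × ℝ) :=
  {q | (∀ i, q.1 i ∈ sect1 R (p.1 i)) ∧ q.2 ∈ sectH s R p.2}

/-- Monge–Ampère measure of `Φ`: `μ_Φ(E) = ∫_E |z|^{1/s-2} dz dx`. -/
def muPhi (n : ℕ) (s : ℝ) (E : Set ((Fin n → ℝ) × ℝ)) : ℝ≥0∞ :=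
  ∫⁻ p in E, ENNReal.ofReal (|p.2| ^ (1 / s - 2))

/-- Monge–Ampère measure of `h`: `μ_h(I) = ∫_I |z|^{1/s-2} dz`. -/
def muH (s : ℝ) (I : Set ℝ) : ℝ≥0∞ :=
  ∫⁻ z in I, ENNReal.ofReal (|z| ^ (1 / s - 2))

/-- Second partial derivative `∂_{ij}` in the `x`-variables. -/
def Dxx (n : ℕ) (U : (Fin n → ℝ) × ℝ → ℝ) (i j : Fin n) (p : (Fin n → ℝ) × ℝ) : ℝ :=
  fderiv ℝ (fun y : Fin n → ℝ =>
    fderiv ℝ (fun y' : Fin n → ℝ => U (y', p.2)) y (Pi.single j 1)) p.1 (Pi.single i 1)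

/-- Second partial derivative `∂_{zz}`. -/
def Dzz (n : ℕ) (U : (Fin n → ℝ) × ℝ → ℝ) (p : (Fin n → ℝ) × ℝ) : ℝ :=
  deriv (fun w => deriv (fun w' => U (p.1, w')) w) p.2

/-- The extension operator `a^{ij}(x) ∂_{ij} + |z|^{2-1/s} ∂_{zz}`. -/
def extOp (n : ℕ) (s : ℝ) (A : (Fin n → ℝ) → Fin n → Fin n → ℝ)
    (U : (Fin n → ℝ) × ℝ → ℝ) (p : (Fin n → ℝ) × ℝ) : ℝ :=
  (∑ i, ∑ j, A p.1 i j * Dxx n U i j p) + |p.2| ^ (2 - 1 / s) * Dzz n U p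

/-- Bounded measurable, symmetric, uniformly elliptic coefficients on `Ω`. -/
def UniformlyElliptic (n : ℕ) (lam Lam : ℝ) (Ω : Set (Fin n → ℝ))
    (A : (Fin n → ℝ) → Fin n → Fin n → ℝ) : Prop :=
  (∀ i j, Measurable fun x => A x i j) ∧
  (∀ x i j, A x i j = A x j i) ∧
  (∀ x ∈ Ω, ∀ ξ : Fin n → ℝ,
    lam * ∑ i, ξ i ^ 2 ≤ ∑ i, ∑ j, A x i j * ξ i * ξ j ∧
    (∑ i, ∑ j, A x i j * ξ i * ξ j) ≤ Lam * ∑ i, ξ i ^ 2)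

/-- A paraboloid of opening `a > 0` with vertex `v`. -/
def IsParaboloid (n : ℕ) (s a : ℝ) (v : (Fin n → ℝ) × ℝ) (P : (Fin n → ℝ) × ℝ → ℝ) : Prop :=
  ∃ c : ℝ, ∀ p, P p = -a * deltaPhi n s v p + c

/-- `P` touches `U` from below at `p₀` in the set `S`. -/
def TouchesBelow (n : ℕ) (P U : (Fin n → ℝ) × ℝ → ℝ)
    (S : Set ((Fin n → ℝ) × ℝ)) (p₀ : (Fin n → ℝ) × ℝ) : Prop :=
  P p₀ = U p₀ ∧ ∀ p ∈ S, P p ≤ U p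

/-! In the coordinate `u(z) = sign z · |z|^{1/(2s)}`, in which `h(z) = (s²/(1-s)) u(z)²`, the
divergence `δ_h(a, b)` is comparable to `(u b - u a)²`. Both are invariant under
`(a, b) ↦ (-a, -b)` and homogeneous of degree `1/s` under `(a, b) ↦ (t a, t b)`, so it suffices
to take `a = 1`, where the comparison is a one-variable estimate obtained from the sign of a
derivative. Hence `δ_Φ` is comparable to the squared Euclidean distance in the coordinates
`(x, u(z))`, which is symmetric and satisfies the triangle inequality up to the factor `2`. -/

open Real

theorem exists_quasi_triangle_of_comparable {α : Type*} {d e : α → α → ℝ} {C c₁ c₂ : ℝ}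
    (hC : 0 ≤ C) (hc₁ : 0 < c₁) (hc₂ : 0 ≤ c₂) (he : ∀ p q, 0 ≤ e p q)
    (he_comm : ∀ p q, e p q = e q p) (he_tri : ∀ p q r, e p q ≤ C * (e p r + e r q))
    (hd_low : ∀ p q, c₁ * e p q ≤ d p q) (hd_up : ∀ p q, d p q ≤ c₂ * e p q) :
    ∃ K : ℝ, 1 ≤ K ∧ ∀ p₁ p₂ p₃,
      d p₁ p₂ ≤ K * (min (d p₁ p₃) (d p₃ p₁) + min (d p₂ p₃) (d p₃ p₂)) := by
  have hmin : ∀ p q, c₁ * e p q ≤ min (d p q) (d q p) := fun p q =>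
    le_min (hd_low p q) (he_comm p q ▸ hd_low q p)
  have hmin_nonneg : ∀ p q, 0 ≤ min (d p q) (d q p) := fun p q =>
    (mul_nonneg hc₁.le (he p q)).trans (hmin p q)
  refine ⟨max 1 (C * c₂ / c₁), le_max_left _ _, fun p₁ p₂ p₃ => ?_⟩
  calc d p₁ p₂ ≤ c₂ * (C * (e p₁ p₃ + e p₃ p₂)) :=
        (hd_up _ _).trans (mul_le_mul_of_nonneg_left (he_tri _ _ _) hc₂)
    _ = C * c₂ / c₁ * (c₁ * e p₁ p₃ + c₁ * e p₂ p₃) := by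
        rw [he_comm p₃ p₂]; field_simp
    _ ≤ C * c₂ / c₁ * (min (d p₁ p₃) (d p₃ p₁) + min (d p₂ p₃) (d p₃ p₂)) := by
        gcongr <;> exact hmin _ _
    _ ≤ _ := by
        gcongr
        · exact add_nonneg (hmin_nonneg _ _) (hmin_nonneg _ _)
        · exact le_max_right _ _

theorem one_add_mul_sub_one_le_rpow_of_nonpos {p x : ℝ} (hp : p ≤ 0) (hx : 0 < x) :
    1 + p * (x - 1) ≤ x ^ p := by
  have hlog : p * (x - 1) ≤ p * Real.log x :=
    mul_le_mul_of_nonpos_left (Real.log_le_sub_one_of_pos hx) hp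
  rw [rpow_def_of_pos hx, mul_comm (Real.log x)]
  linarith [add_one_le_exp (p * Real.log x)]

theorem rpow_le_one_add_sq {q v : ℝ} (hq0 : 0 ≤ q) (hq2 : q ≤ 2) (hv : 0 ≤ v) :
    v ^ q ≤ 1 + v ^ 2 := by
  rcases le_total v 1 with hv1 | hv1
  · linarith [rpow_le_one hv hv1 hq0, sq_nonneg v]
  · have := rpow_le_rpow_of_exponent_le hv1 hq2
    norm_cast at this
    linarith

def signPow (r z : ℝ) : ℝ := Real.sign z * |z| ^ r

section signPow

variable {r : ℝ}

theorem signPow_of_pos {z : ℝ} (hz : 0 < z) : signPow r z = z ^ r := by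
  rw [signPow, sign_of_pos hz, abs_of_pos hz, one_mul]

theorem signPow_of_nonneg (hr : r ≠ 0) {z : ℝ} (hz : 0 ≤ z) : signPow r z = z ^ r := by
  rcases hz.eq_or_lt with rfl | hz
  · simp [signPow, zero_rpow hr]
  · exact signPow_of_pos hz

theorem signPow_neg (z : ℝ) : signPow r (-z) = -signPow r z := by
  rw [signPow, signPow, sign_neg, abs_neg, neg_mul]

theorem signPow_of_neg (hr : r ≠ 0) {z : ℝ} (hz : z < 0) : signPow r z = -(-z) ^ r := by
  rw [← neg_neg z, signPow_neg, neg_neg, signPow_of_nonneg hr (by linarith)]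

theorem signPow_zero : signPow r 0 = 0 := by simp [signPow]

theorem abs_signPow (hr : r ≠ 0) (z : ℝ) : |signPow r z| = |z| ^ r := by
  rcases le_total 0 z with hz | hz
  · rw [signPow_of_nonneg hr hz, abs_of_nonneg hz, abs_of_nonneg (rpow_nonneg hz r)]
  · rw [← abs_neg, ← signPow_neg, signPow_of_nonneg hr (neg_nonneg.2 hz), ← abs_neg z,
      abs_of_nonneg (neg_nonneg.2 hz), abs_of_nonneg (rpow_nonneg (neg_nonneg.2 hz) r)]

theorem sq_signPow (hr : r ≠ 0) (z : ℝ) : signPow r z ^ 2 = |z| ^ (2 * r) := by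
  rw [← sq_abs, abs_signPow hr, ← rpow_natCast, ← rpow_mul (abs_nonneg z), mul_comm]
  norm_num

theorem signPow_mul {t : ℝ} (ht : 0 < t) (z : ℝ) :
    signPow r (t * z) = t ^ r * signPow r z := by
  rcases lt_trichotomy z 0 with hz | rfl | hz
  · rw [← neg_neg z, signPow_neg, mul_neg, signPow_neg,
      signPow_of_pos (mul_pos ht (neg_pos.2 hz)), signPow_of_pos (neg_pos.2 hz),
      mul_rpow ht.le (neg_pos.2 hz).le, mul_neg]
  · simp [signPow_zero]
  · rw [signPow_of_pos (mul_pos ht hz), signPow_of_pos hz, mul_rpow ht.le hz.le]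

theorem signPow_signPow_inv (hr : r ≠ 0) (z : ℝ) : signPow r (signPow r⁻¹ z) = z := by
  rcases lt_trichotomy z 0 with hz | rfl | hz
  · rw [signPow_of_neg (inv_ne_zero hr) hz, signPow_neg, signPow_of_nonneg hr
      (rpow_nonneg (by linarith) _), ← rpow_mul (by linarith), inv_mul_cancel₀ hr, rpow_one,
      neg_neg]
  · simp [signPow_zero]
  · rw [signPow_of_pos hz, signPow_of_pos (rpow_pos_of_pos hz _), ← rpow_mul hz.le,
      inv_mul_cancel₀ hr, rpow_one]

theorem signPow_inv_signPow (hr : r ≠ 0) (z : ℝ) : signPow r⁻¹ (signPow r z) = z := by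
  simpa using signPow_signPow_inv (inv_ne_zero hr) z

end signPow

theorem le_of_forall_sub_mul_deriv_nonneg {f f' : ℝ → ℝ} {D : Set ℝ} (hD : Convex ℝ D)
    (hf : ContinuousOn f D) (hf' : ∀ y ∈ interior D, HasDerivAt f (f' y) y) {c x : ℝ}
    (h : ∀ y ∈ interior D, 0 ≤ (y - c) * f' y) (hc : c ∈ D) (hx : x ∈ D) : f c ≤ f x := by
  rcases le_total c x with hcx | hxc
  · have hsub : Icc c x ⊆ D := hD.ordConnected.out hc hx
    have hint : interior (Icc c x) ⊆ interior D := interior_mono hsub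
    refine monotoneOn_of_hasDerivWithinAt_nonneg (convex_Icc c x) (hf.mono hsub)
      (fun y hy => (hf' y (hint hy)).hasDerivWithinAt) (fun y hy => ?_)
      (left_mem_Icc.2 hcx) (right_mem_Icc.2 hcx) hcx
    rw [interior_Icc] at hy
    have := h y (hint (by rwa [interior_Icc]))
    nlinarith [hy.1]
  · have hsub : Icc x c ⊆ D := hD.ordConnected.out hx hc
    have hint : interior (Icc x c) ⊆ interior D := interior_mono hsub
    refine antitoneOn_of_hasDerivWithinAt_nonpos (convex_Icc x c) (hf.mono hsub)
      (fun y hy => (hf' y (hint hy)).hasDerivWithinAt) (fun y hy => ?_)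
      (left_mem_Icc.2 hxc) (right_mem_Icc.2 hxc) hxc
    rw [interior_Icc] at hy
    have := h y (hint (by rwa [interior_Icc]))
    nlinarith [hy.2]

/-- For `w ≥ 0`, `(s²/(1-s)) · powGap s w = δ_h(1, w^{2s})`: the divergence at `1` in the
coordinate `u = w`. -/
def powGap (s w : ℝ) : ℝ := w ^ 2 - 1 - (w ^ (2 * s) - 1) / s

section powGap

variable {s : ℝ}

theorem powGap_one : powGap s 1 = 0 := by simp [powGap]

theorem powGap_zero (hs : s ≠ 0) : powGap s 0 = 1 / s - 1 := by
  simp [powGap, zero_rpow (mul_ne_zero two_ne_zero hs)]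
  ring

theorem continuous_powGap (hs : 0 ≤ s) : Continuous (powGap s) := by
  have := continuous_rpow_const (by positivity : (0 : ℝ) ≤ 2 * s)
  unfold powGap
  fun_prop

theorem hasDerivAt_powGap (hs : s ≠ 0) {w : ℝ} (hw : 0 < w) :
    HasDerivAt (powGap s) (2 * w - 2 * w ^ (2 * s - 1)) w := by
  have hpow := (hasDerivAt_rpow_const (p := 2 * s) (Or.inl hw.ne')).sub_const 1
  refine (((hasDerivAt_pow 2 w).sub_const 1).fun_sub (hpow.div_const s)).congr_deriv ?_
  field_simp
  ring

theorem antitoneOn_powGap (hs0 : 0 < s) (hs1 : s ≤ 1) : AntitoneOn (powGap s) (Icc 0 1) := by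
  refine antitoneOn_of_hasDerivWithinAt_nonpos (f' := fun w => 2 * w - 2 * w ^ (2 * s - 1))
    (convex_Icc 0 1)
    (continuous_powGap hs0.le).continuousOn
    (fun w hw => ?_) (fun w hw => ?_)
  all_goals rw [interior_Icc] at hw
  · exact (hasDerivAt_powGap hs0.ne' hw.1).hasDerivWithinAt
  · have := rpow_le_rpow_of_exponent_ge hw.1 hw.2.le (by linarith : 2 * s - 1 ≤ 1)
    rw [rpow_one] at this
    linarith

theorem sub_one_mul_sub_rpow_bounds (hs0 : 0 < s) (hs1 : s < 1) {x : ℝ} (hx : 1 / 2 ≤ x) :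
    (1 - s) * (x - 1) ^ 2 ≤ (x - 1) * (x - x ^ (2 * s - 1)) ∧
      (x - 1) * (x - x ^ (2 * s - 1)) ≤ 3 * (x - 1) ^ 2 := by
  have hx0 : 0 < x := by linarith
  have hinv : x * x⁻¹ = 1 := mul_inv_cancel₀ hx0.ne'
  have hup : (x - 1) * (x - x ^ (2 * s - 1)) ≤ (x - 1) * (x - x⁻¹) := by
    rw [← rpow_neg_one]
    rcases le_total 1 x with hx1 | hx1
    · have := rpow_le_rpow_of_exponent_le hx1 (by linarith : (-1 : ℝ) ≤ 2 * s - 1)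
      nlinarith
    · have := rpow_le_rpow_of_exponent_ge hx0 hx1 (by linarith : (-1 : ℝ) ≤ 2 * s - 1)
      nlinarith
  refine ⟨?_, hup.trans (by nlinarith [inv_pos.2 hx0])⟩
  rcases le_total 1 x with hx1 | hx1
  · rcases le_total (2 * s - 1) 0 with hp | hp
    · nlinarith [rpow_le_one_of_one_le_of_nonpos hx1 hp]
    · have := rpow_one_add_le_one_add_mul_self (by linarith : (-1 : ℝ) ≤ x - 1) hp
        (by linarith : 2 * s - 1 ≤ 1)
      rw [add_sub_cancel] at this
      nlinarith
  · have hb := one_add_mul_sub_one_le_rpow_of_nonpos (by linarith : 2 * s - 2 ≤ 0) hx0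
    have hsplit : x ^ (2 * s - 1) = x * x ^ (2 * s - 2) := by
      rw [show 2 * s - 1 = 1 + (2 * s - 2) by ring, rpow_add hx0, rpow_one]
    have hgap : 2 * (1 - s) * x * (1 - x) ≤ x ^ (2 * s - 1) - x := by
      rw [hsplit]; nlinarith [mul_le_mul_of_nonneg_left hb hx0.le]
    have hs' : 0 ≤ (1 - s) * (1 - x) ^ 2 := mul_nonneg (by linarith) (sq_nonneg _)
    nlinarith [mul_le_mul_of_nonneg_left hgap (by linarith : 0 ≤ 1 - x),
      mul_nonneg (by linarith : 0 ≤ 2 * x - 1) hs']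

theorem powGap_bounds_of_half_le (hs0 : 0 < s) (hs1 : s < 1) {w : ℝ} (hw : 1 / 2 ≤ w) :
    (1 - s) * (w - 1) ^ 2 ≤ powGap s w ∧ powGap s w ≤ 3 * (w - 1) ^ 2 := by
  have hderiv : ∀ k : ℝ, ∀ y ∈ interior (Ici (1 / 2 : ℝ)),
      HasDerivAt (fun x => powGap s x - k * (x - 1) ^ 2)
        (2 * y - 2 * y ^ (2 * s - 1) - k * (2 * (y - 1))) y := fun k y hy => by
    rw [interior_Ici, mem_Ioi] at hy
    refine ((hasDerivAt_powGap hs0.ne' (by linarith : 0 < y)).fun_sub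
      ((((hasDerivAt_id y).sub_const 1).fun_pow 2).const_mul k)).congr_deriv ?_
    simp
  have hcont : ∀ k : ℝ, Continuous (fun x => powGap s x - k * (x - 1) ^ 2) := fun k =>
    (continuous_powGap hs0.le).sub (by fun_prop)
  have hbounds := fun y (hy : y ∈ interior (Ici (1 / 2 : ℝ))) =>
    sub_one_mul_sub_rpow_bounds hs0 hs1 (le_of_lt (by rwa [interior_Ici] at hy))
  -- `powGap s - k (· - 1)²` vanishes at `1`, which is its minimum on `[1/2, ∞)` for `k = 1 - s`
  -- and its maximum for `k = 3`.
  constructor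
  · have := le_of_forall_sub_mul_deriv_nonneg (convex_Ici _) (hcont (1 - s)).continuousOn
      (hderiv (1 - s)) (fun y hy => by nlinarith [(hbounds y hy).1])
      (by norm_num : (1 : ℝ) ∈ Ici (1 / 2)) hw
    rw [powGap_one] at this
    linarith
  · have := le_of_forall_sub_mul_deriv_nonneg (convex_Ici _) (hcont 3).neg.continuousOn
      (fun y hy => (hderiv 3 y hy).neg) (fun y hy => by nlinarith [(hbounds y hy).2])
      (by norm_num : (1 : ℝ) ∈ Ici (1 / 2)) hw
    simp only [Pi.neg_apply, powGap_one] at this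
    linarith

theorem powGap_bounds (hs0 : 0 < s) (hs1 : s < 1) {w : ℝ} (hw : 0 ≤ w) :
    (1 - s) / 4 * (w - 1) ^ 2 ≤ powGap s w ∧ powGap s w ≤ 4 / s * (w - 1) ^ 2 := by
  have h3 : 3 ≤ 4 / s := by rw [le_div_iff₀ hs0]; linarith
  rcases le_total (1 / 2) w with hw2 | hw2
  · obtain ⟨hl, hu⟩ := powGap_bounds_of_half_le hs0 hs1 hw2
    constructor <;> nlinarith [sq_nonneg (w - 1)]
  · -- Near `0` the derivative of `powGap s` is not comparable to `w - 1`; monotonicity suffices.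
    have hmem : w ∈ Icc (0 : ℝ) 1 := ⟨hw, by linarith⟩
    have hupper := antitoneOn_powGap hs0 hs1.le ⟨le_rfl, zero_le_one⟩ hmem hw
    have hlower := antitoneOn_powGap hs0 hs1.le hmem ⟨by norm_num, by norm_num⟩ hw2
    have hhalf := (powGap_bounds_of_half_le hs0 hs1 (le_refl (1 / 2 : ℝ))).1
    rw [powGap_zero hs0.ne'] at hupper
    have hinv : 1 ≤ 1 / s := by rw [le_div_iff₀ hs0]; linarith
    have hsq : 1 / 4 ≤ (w - 1) ^ 2 ∧ (w - 1) ^ 2 ≤ 1 := ⟨by nlinarith, by nlinarith⟩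
    constructor
    · nlinarith
    · rw [div_eq_mul_one_div 4 s]
      nlinarith

end powGap

theorem sq_sub_one_add_rpow_bounds {s v : ℝ} (hs0 : 0 < s) (hs1 : s < 1) (hv : 0 ≤ v) :
    (1 - s) / 4 * (v + 1) ^ 2 ≤ v ^ 2 - 1 + (v ^ (2 * s) + 1) / s ∧
      v ^ 2 - 1 + (v ^ (2 * s) + 1) / s ≤ 4 / s * (v + 1) ^ 2 := by
  have hinv : 1 < 1 / s := by rw [lt_div_iff₀ hs0]; linarith
  have hpow := rpow_le_one_add_sq (by linarith : 0 ≤ 2 * s) (by linarith) hv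
  have hpow0 := rpow_nonneg hv (2 * s)
  have hgap : 1 - s ≤ 1 / s - 1 := by
    rw [div_sub_one hs0.ne', le_div_iff₀ hs0]; nlinarith
  rw [div_eq_mul_one_div _ s, div_eq_mul_one_div 4 s]
  constructor <;> nlinarith [mul_nonneg (by linarith : 0 ≤ 1 - s) (sq_nonneg (v - 1)),
    mul_le_mul_of_nonneg_right hpow (by linarith : 0 ≤ 1 / s),
    mul_nonneg hpow0 (by linarith : 0 ≤ 1 / s), mul_nonneg hv (by linarith : 0 ≤ 1 / s)]

theorem sq_sub_one_sub_signPow_bounds {s : ℝ} (hs0 : 0 < s) (hs1 : s < 1) (w : ℝ) :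
    (1 - s) / 4 * (w - 1) ^ 2 ≤ w ^ 2 - 1 - (signPow (2 * s) w - 1) / s ∧
      w ^ 2 - 1 - (signPow (2 * s) w - 1) / s ≤ 4 / s * (w - 1) ^ 2 := by
  have h2s : 2 * s ≠ 0 := by positivity
  rcases le_total 0 w with hw | hw
  · rw [signPow_of_nonneg h2s hw]
    exact powGap_bounds hs0 hs1 hw
  · obtain ⟨v, hv, rfl⟩ : ∃ v, 0 ≤ v ∧ w = -v := ⟨-w, by linarith, by ring⟩
    rw [signPow_neg, signPow_of_nonneg h2s hv]
    convert sq_sub_one_add_rpow_bounds hs0 hs1 hv using 2 <;> ring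

section deltaH

variable {s : ℝ}

theorem deltaH_neg_neg (a b : ℝ) : deltaH s (-a) (-b) = deltaH s a b := by
  simp only [deltaH, hFun, hDeriv, abs_neg]
  ring

theorem deltaH_mul_mul {t : ℝ} (ht : 0 < t) (a b : ℝ) :
    deltaH s (t * a) (t * b) = t ^ (1 / s) * deltaH s a b := by
  have key : t ^ (1 / s - 2) * (t * t) = t ^ (1 / s) := by
    rw [rpow_sub ht, rpow_two]
    field_simp
  simp only [deltaH, hFun, hDeriv, abs_mul, abs_of_pos ht,
    mul_rpow ht.le (abs_nonneg a), mul_rpow ht.le (abs_nonneg b)]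
  linear_combination (-(s / (1 - s) * |a| ^ (1 / s - 2) * a * (b - a))) * key

theorem deltaH_zero_left (hs : s ≠ 0) (b : ℝ) :
    deltaH s 0 b = s ^ 2 / (1 - s) * |b| ^ (1 / s) := by
  simp [deltaH, hFun, hDeriv, zero_rpow (inv_ne_zero hs)]

theorem deltaH_one_signPow (hs0 : s ≠ 0) (hs1 : s ≠ 1) (w : ℝ) :
    deltaH s 1 (signPow (2 * s) w) =
      s ^ 2 / (1 - s) * (w ^ 2 - 1 - (signPow (2 * s) w - 1) / s) := by
  have hh : |signPow (2 * s) w| ^ (1 / s) = w ^ 2 := by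
    rw [abs_signPow (by positivity), ← rpow_mul (abs_nonneg w),
      show 2 * s * (1 / s) = 2 by field_simp, rpow_two, sq_abs]
  have h1s : 1 - s ≠ 0 := sub_ne_zero.2 (Ne.symm hs1)
  simp only [deltaH, hFun, hDeriv, hh, abs_one, one_rpow, mul_one]
  field_simp

theorem deltaH_one_bounds (hs0 : 0 < s) (hs1 : s < 1) (b : ℝ) :
    s ^ 2 / 4 * (signPow (2 * s)⁻¹ b - 1) ^ 2 ≤ deltaH s 1 b ∧
      deltaH s 1 b ≤ 4 * s / (1 - s) * (signPow (2 * s)⁻¹ b - 1) ^ 2 := by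
  have h2s : 2 * s ≠ 0 := by positivity
  obtain ⟨w, rfl⟩ : ∃ w, b = signPow (2 * s) w := ⟨_, (signPow_signPow_inv h2s b).symm⟩
  rw [signPow_inv_signPow h2s, deltaH_one_signPow hs0.ne' hs1.ne]
  obtain ⟨hl, hu⟩ := sq_sub_one_sub_signPow_bounds hs0 hs1 w
  have h1s : 0 < 1 - s := sub_pos.2 hs1
  have hc : 0 < s ^ 2 / (1 - s) := by positivity
  constructor
  · refine (le_of_eq ?_).trans (mul_le_mul_of_nonneg_left hl hc.le)
    field_simp
  · refine (mul_le_mul_of_nonneg_left hu hc.le).trans (le_of_eq ?_)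
    field_simp

theorem deltaH_bounds_of_pos (hs0 : 0 < s) (hs1 : s < 1) {a : ℝ} (ha : 0 < a) (b : ℝ) :
    s ^ 2 / 4 * (signPow (2 * s)⁻¹ b - signPow (2 * s)⁻¹ a) ^ 2 ≤ deltaH s a b ∧
      deltaH s a b ≤ 4 * s / (1 - s) * (signPow (2 * s)⁻¹ b - signPow (2 * s)⁻¹ a) ^ 2 := by
  have hb : a * (b / a) = b := mul_div_cancel₀ b ha.ne'
  have hd : deltaH s a b = a ^ (1 / s) * deltaH s 1 (b / a) := by
    rw [← deltaH_mul_mul ha, mul_one, hb]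
  have hu : (signPow (2 * s)⁻¹ b - signPow (2 * s)⁻¹ a) ^ 2 =
      a ^ (1 / s) * (signPow (2 * s)⁻¹ (b / a) - 1) ^ 2 := by
    rw [← hb, signPow_mul ha, hb, signPow_of_pos ha,
      show 1 / s = (2 * s)⁻¹ * 2 by field_simp, rpow_mul ha.le, rpow_two]
    ring
  obtain ⟨hl, hu'⟩ := deltaH_one_bounds hs0 hs1 (b / a)
  have ha' : 0 ≤ a ^ (1 / s) := rpow_nonneg ha.le _
  rw [hd, hu]
  constructor <;> nlinarith [mul_le_mul_of_nonneg_left hl ha', mul_le_mul_of_nonneg_left hu' ha']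

theorem deltaH_bounds (hs0 : 0 < s) (hs1 : s < 1) (a b : ℝ) :
    s ^ 2 / 4 * (signPow (2 * s)⁻¹ b - signPow (2 * s)⁻¹ a) ^ 2 ≤ deltaH s a b ∧
      deltaH s a b ≤ 4 * s / (1 - s) * (signPow (2 * s)⁻¹ b - signPow (2 * s)⁻¹ a) ^ 2 := by
  rcases lt_trichotomy a 0 with ha | rfl | ha
  · have := deltaH_bounds_of_pos hs0 hs1 (neg_pos.2 ha) (-b)
    rwa [deltaH_neg_neg, signPow_neg, signPow_neg, neg_sub_neg, ← neg_sub, neg_sq] at this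
  · have hs1' : 0 < 1 - s := sub_pos.2 hs1
    rw [deltaH_zero_left hs0.ne', signPow_zero, sub_zero, sq_signPow (by positivity),
      show 2 * (2 * s)⁻¹ = 1 / s by field_simp]
    have hb := rpow_nonneg (abs_nonneg b) (1 / s)
    constructor
    · refine mul_le_mul_of_nonneg_right ?_ hb
      rw [div_le_div_iff₀ (by norm_num) hs1']
      nlinarith
    · refine mul_le_mul_of_nonneg_right ?_ hb
      rw [div_le_div_iff₀ hs1' hs1']
      nlinarith [mul_nonneg (mul_nonneg hs0.le (by linarith : 0 ≤ 4 - s)) hs1'.le]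
  · exact deltaH_bounds_of_pos hs0 hs1 ha b

end deltaH

theorem deltaE_nonneg (n : ℕ) (x y : Fin n → ℝ) : 0 ≤ deltaE n x y := by
  unfold deltaE
  positivity

theorem deltaE_comm (n : ℕ) (x y : Fin n → ℝ) : deltaE n x y = deltaE n y x := by
  simp only [deltaE, ← neg_sub (x _), neg_sq]

theorem sq_sub_le_two_mul (a b c : ℝ) : (b - a) ^ 2 ≤ 2 * ((c - a) ^ 2 + (b - c) ^ 2) := by
  nlinarith [sq_nonneg (c - a - (b - c))]

theorem deltaE_le_two_mul (n : ℕ) (x y z : Fin n → ℝ) :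
    deltaE n x y ≤ 2 * (deltaE n x z + deltaE n z y) := by
  have := Finset.sum_le_sum fun i (_ : i ∈ Finset.univ) => sq_sub_le_two_mul (x i) (y i) (z i)
  simp only [deltaE, ← Finset.mul_sum, Finset.sum_add_distrib] at this ⊢
  linarith

def straightSqDist (n : ℕ) (s : ℝ) (p q : (Fin n → ℝ) × ℝ) : ℝ :=
  deltaE n p.1 q.1 + (signPow (2 * s)⁻¹ q.2 - signPow (2 * s)⁻¹ p.2) ^ 2

section straightSqDist

variable {n : ℕ} {s : ℝ}

theorem straightSqDist_nonneg (p q : (Fin n → ℝ) × ℝ) : 0 ≤ straightSqDist n s p q :=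
  add_nonneg (deltaE_nonneg n _ _) (sq_nonneg _)

theorem straightSqDist_comm (p q : (Fin n → ℝ) × ℝ) :
    straightSqDist n s p q = straightSqDist n s q p := by
  rw [straightSqDist, straightSqDist, deltaE_comm, ← neg_sub, neg_sq]

theorem straightSqDist_le_two_mul (p q r : (Fin n → ℝ) × ℝ) :
    straightSqDist n s p q ≤ 2 * (straightSqDist n s p r + straightSqDist n s r q) := by
  have := deltaE_le_two_mul n p.1 q.1 r.1
  have := sq_sub_le_two_mul (signPow (2 * s)⁻¹ p.2) (signPow (2 * s)⁻¹ q.2) (signPow (2 * s)⁻¹ r.2)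
  simp only [straightSqDist]
  linarith

theorem deltaPhi_bounds (hs0 : 0 < s) (hs1 : s < 1) (p q : (Fin n → ℝ) × ℝ) :
    min 1 (s ^ 2 / 4) * straightSqDist n s p q ≤ deltaPhi n s p q ∧
      deltaPhi n s p q ≤ max 1 (4 * s / (1 - s)) * straightSqDist n s p q := by
  obtain ⟨hl, hu⟩ := deltaH_bounds hs0 hs1 p.2 q.2
  have hE := deltaE_nonneg n p.1 q.1
  have hU := sq_nonneg (signPow (2 * s)⁻¹ q.2 - signPow (2 * s)⁻¹ p.2)
  simp only [deltaPhi, straightSqDist, mul_add]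
  constructor
  · nlinarith [min_le_left 1 (s ^ 2 / 4), min_le_right 1 (s ^ 2 / 4)]
  · nlinarith [le_max_left 1 (4 * s / (1 - s)), le_max_right 1 (4 * s / (1 - s))]

end straightSqDist

theorem deltaPhi_quasi_distance_general
    (n : ℕ) (s : ℝ) (hs0 : 0 < s) (hs1 : s < 1) :
    ∃ K : ℝ, 1 ≤ K ∧
      ∀ p₁ p₂ p₃ : (Fin n → ℝ) × ℝ,
        deltaPhi n s p₁ p₂ ≤
          K * (min (deltaPhi n s p₁ p₃) (deltaPhi n s p₃ p₁) +
            min (deltaPhi n s p₂ p₃) (deltaPhi n s p₃ p₂)) :=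
  exists_quasi_triangle_of_comparable zero_le_two (lt_min one_pos (by positivity))
    (zero_le_one.trans (le_max_left _ _)) straightSqDist_nonneg straightSqDist_comm
    straightSqDist_le_two_mul (fun p q => (deltaPhi_bounds hs0 hs1 p q).1)
    (fun p q => (deltaPhi_bounds hs0 hs1 p q).2)

/-- Corollary 4.5(4): `δ_Φ` is a quasi-distance. -/
theorem deltaPhi_quasi_distance
    (n : ℕ) (hn : 1 ≤ n) (s : ℝ) (hs0 : 0 < s) (hs1 : s < 1) :
    ∃ K : ℝ, 1 ≤ K ∧
      ∀ p₁ p₂ p₃ : (Fin n → ℝ) × ℝ,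
        deltaPhi n s p₁ p₂ ≤
          K * (min (deltaPhi n s p₁ p₃) (deltaPhi n s p₃ p₁) +
            min (deltaPhi n s p₂ p₃) (deltaPhi n s p₃ p₂)) :=
  deltaPhi_quasi_distance_general n s hs0 hs1
end
end

section
/- The function Φ satisfies the engulfing property: there exists a constant θ = θ(n,s) ≥ 1 such that for every (x,z) ∈ ℝ^{n+1}, every R > 0, and every (x₁,z₁) ∈ S_R(x,z), one has S_R(x,z) ⊂ S_{θR}(x₁,z₁). -/
open Set MeasureTheory
open scoped ENNReal

noncomputable section

/-!
Up to the factor `s ^ 2 / (1 - s)`, `δ_h` is the Bregman divergence `D(w, z)` of `|z| ^ p`,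
`p = 1 / s`. With `S z = sgn z * |z| ^ (p / 2)`, `D(w, z)` is comparable to `(S z - S w) ^ 2`
uniformly in `w` and `z`: both are `p`-homogeneous and invariant under `(w, z) ↦ (-w, -z)`, so it
suffices to take `w = 1`. There, `z ≤ 0` and `z` near `0` are handled by crude bounds (near `0`
the derivatives of the two sides are not comparable), and the rest by comparing derivatives, both
sides vanishing at `z = 1`.

Squared differences satisfy the quasi-triangle inequality `δ(y, z) ≤ 2 (δ(x, y) + δ(x, z))`,
hence so do `δ_h` and `δ_Φ = |x - y|² / 2 + δ_h`, with some constant `T`; for `q, r ∈ S_R(p)`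
it gives `δ_Φ(q, r) < 2 T R`.
-/

open Filter Asymptotics

namespace MongeAmpere

lemma one_add_mul_sub_one_le_rpow {p : ℝ} (hp : 1 ≤ p) {x : ℝ} (hx : 0 ≤ x) :
    1 + p * (x - 1) ≤ x ^ p := by
  simpa using one_add_mul_self_le_rpow_one_add (by linarith : (-1 : ℝ) ≤ x - 1) hp

def signedRpow (γ u : ℝ) : ℝ := |u| ^ (γ - 1) * u

section SignedRpow

variable {γ : ℝ}

@[simp] lemma signedRpow_zero : signedRpow γ 0 = 0 := by simp [signedRpow]

@[simp] lemma signedRpow_one : signedRpow γ 1 = 1 := by simp [signedRpow]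

lemma signedRpow_neg (u : ℝ) : signedRpow γ (-u) = -signedRpow γ u := by
  simp [signedRpow]

lemma signedRpow_mul (a b : ℝ) : signedRpow γ (a * b) = signedRpow γ a * signedRpow γ b := by
  simp only [signedRpow, abs_mul, Real.mul_rpow (abs_nonneg a) (abs_nonneg b)]
  ring

lemma signedRpow_of_nonneg (hγ : γ ≠ 0) {u : ℝ} (hu : 0 ≤ u) :
    signedRpow γ u = u ^ γ := by
  rcases hu.eq_or_lt with rfl | hu
  · simp [Real.zero_rpow hγ]
  · rw [signedRpow, abs_of_pos hu, Real.rpow_sub_one hu.ne', div_mul_cancel₀ _ hu.ne']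

lemma signedRpow_of_nonpos (hγ : γ ≠ 0) {u : ℝ} (hu : u ≤ 0) :
    signedRpow γ u = -|u| ^ γ := by
  rw [← neg_neg u, signedRpow_neg, signedRpow_of_nonneg hγ (neg_nonneg.2 hu), abs_neg,
    abs_of_nonneg (neg_nonneg.2 hu)]

lemma signedRpow_mul_signedRpow {u : ℝ} (hu : u ≠ 0) (δ : ℝ) :
    signedRpow γ u * signedRpow δ u = |u| ^ (γ + δ) := by
  have hpos : 0 < |u| := abs_pos.2 hu
  rw [signedRpow, signedRpow, show γ + δ = (γ - 1) + (δ - 1) + 2 by ring,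
    Real.rpow_add hpos, Real.rpow_add hpos, Real.rpow_two, sq_abs]
  ring

lemma signedRpow_half_sq {p : ℝ} (hp : p ≠ 0) (u : ℝ) :
    signedRpow (p / 2) u ^ 2 = |u| ^ p := by
  rcases eq_or_ne u 0 with rfl | hu
  · simp [Real.zero_rpow hp]
  · rw [sq, signedRpow_mul_signedRpow hu, add_halves]

end SignedRpow

/-- The Bregman divergence of `z ↦ |z| ^ p`, whose derivative is `p * signedRpow (p - 1)`. -/
def bregmanAbsRpow (p w z : ℝ) : ℝ := |z| ^ p - |w| ^ p - p * signedRpow (p - 1) w * (z - w)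

section Bregman

variable {p : ℝ}

lemma bregmanAbsRpow_one_left (u : ℝ) : bregmanAbsRpow p 1 u = |u| ^ p - 1 - p * (u - 1) := by
  simp [bregmanAbsRpow]

lemma bregmanAbsRpow_zero_left (hp : p ≠ 0) (z : ℝ) : bregmanAbsRpow p 0 z = |z| ^ p := by
  simp [bregmanAbsRpow, Real.zero_rpow hp]

lemma bregmanAbsRpow_eq_mul {w : ℝ} (hw : w ≠ 0) (z : ℝ) :
    bregmanAbsRpow p w z = |w| ^ p * bregmanAbsRpow p 1 (z / w) := by
  have hsw : signedRpow (p - 1) w * w = |w| ^ p := by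
    simpa [signedRpow] using signedRpow_mul_signedRpow (γ := p - 1) hw 1
  rw [bregmanAbsRpow_one_left, abs_div, Real.div_rpow (abs_nonneg z) (abs_nonneg w),
    bregmanAbsRpow]
  field_simp
  linear_combination (-(p * (z - w))) * hsw

lemma sq_sub_signedRpow_eq_mul {w : ℝ} (hp : p ≠ 0) (hw : w ≠ 0) (z : ℝ) :
    (signedRpow (p / 2) z - signedRpow (p / 2) w) ^ 2 =
      |w| ^ p * (signedRpow (p / 2) (z / w) - 1) ^ 2 := by
  conv_lhs => rw [← mul_div_cancel₀ z hw, signedRpow_mul]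
  rw [← signedRpow_half_sq hp w]
  ring

lemma bregmanAbsRpow_nonneg (hp : 1 ≤ p) (w z : ℝ) : 0 ≤ bregmanAbsRpow p w z := by
  have hone : ∀ u, 0 ≤ bregmanAbsRpow p 1 u := fun u => by
    rw [bregmanAbsRpow_one_left]
    nlinarith [one_add_mul_sub_one_le_rpow hp (abs_nonneg u), le_abs_self u]
  rcases eq_or_ne w 0 with rfl | hw
  · rw [bregmanAbsRpow_zero_left (by linarith)]
    positivity
  · rw [bregmanAbsRpow_eq_mul hw]
    exact mul_nonneg (by positivity) (hone _)

end Bregman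

lemma isTheta_principal_of_le {α : Type*} {f g : α → ℝ} {S : Set α} {c c' : ℝ}
    (hf : ∀ x ∈ S, 0 ≤ f x) (hg : ∀ x ∈ S, 0 ≤ g x)
    (hfg : ∀ x ∈ S, f x ≤ c * g x) (hgf : ∀ x ∈ S, g x ≤ c' * f x) : f =Θ[𝓟 S] g :=
  ⟨.of_bound c <| eventually_principal.2 fun x hx => by
      simpa only [Real.norm_of_nonneg (hf x hx), Real.norm_of_nonneg (hg x hx)] using hfg x hx,
    .of_bound c' <| eventually_principal.2 fun x hx => by
      simpa only [Real.norm_of_nonneg (hf x hx), Real.norm_of_nonneg (hg x hx)] using hgf x hx⟩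

section DerivativeComparison

variable {f g f' g' : ℝ → ℝ} {b c : ℝ}

lemma le_const_mul_on_Ici_of_hasDerivAt (hf : ∀ x ∈ Ici b, HasDerivAt f (f' x) x)
    (hg : ∀ x ∈ Ici b, HasDerivAt g (g' x) x) (hfb : f b = 0) (hgb : g b = 0)
    (hderiv : ∀ x ∈ Ioi b, f' x ≤ c * g' x) : ∀ x ∈ Ici b, f x ≤ c * g x := by
  have hdiff : ∀ x ∈ Ici b, HasDerivAt (fun x => c * g x - f x) (c * g' x - f' x) x :=
    fun x hx => ((hg x hx).const_mul c).sub (hf x hx)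
  have hmono : MonotoneOn (fun x => c * g x - f x) (Ici b) := by
    refine monotoneOn_of_hasDerivWithinAt_nonneg (convex_Ici b)
      (fun x hx => (hdiff x hx).continuousAt.continuousWithinAt)
      (fun x hx => (hdiff x (interior_subset hx)).hasDerivWithinAt) fun x hx => ?_
    rw [interior_Ici] at hx
    linarith [hderiv x hx]
  intro x hx
  have := hmono self_mem_Ici hx hx
  simp only [hfb, hgb, mul_zero, sub_zero] at this
  linarith

lemma le_const_mul_on_Icc_of_hasDerivAt {a : ℝ} (hf : ∀ x ∈ Icc a b, HasDerivAt f (f' x) x)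
    (hg : ∀ x ∈ Icc a b, HasDerivAt g (g' x) x) (hfb : f b = 0) (hgb : g b = 0)
    (hderiv : ∀ x ∈ Ioo a b, c * g' x ≤ f' x) : ∀ x ∈ Icc a b, f x ≤ c * g x := by
  have hdiff : ∀ x ∈ Icc a b, HasDerivAt (fun x => c * g x - f x) (c * g' x - f' x) x :=
    fun x hx => ((hg x hx).const_mul c).sub (hf x hx)
  have hanti : AntitoneOn (fun x => c * g x - f x) (Icc a b) := by
    refine antitoneOn_of_hasDerivWithinAt_nonpos (convex_Icc a b)
      (fun x hx => (hdiff x hx).continuousAt.continuousWithinAt)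
      (fun x hx => (hdiff x (interior_subset hx)).hasDerivWithinAt) fun x hx => ?_
    rw [interior_Icc] at hx
    linarith [hderiv x hx]
  intro x hx
  have := hanti hx (right_mem_Icc.2 (hx.1.trans hx.2)) hx.2
  simp only [hfb, hgb, mul_zero, sub_zero] at this
  linarith

end DerivativeComparison

section RpowInequalities

lemma one_sub_rpow_le_mul_one_sub_rpow {γ δ z : ℝ} (hδ : 0 < δ) (hz0 : 0 < z)
    (hz1 : z ≤ 1) :
    1 - z ^ γ ≤ max 1 (γ / δ) * (1 - z ^ δ) := by
  have hzδ : z ^ δ ≤ 1 := Real.rpow_le_one hz0.le hz1 hδ.le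
  rcases le_or_gt γ δ with h | h
  · have : z ^ δ ≤ z ^ γ := Real.rpow_le_rpow_of_exponent_ge hz0 hz1 h
    nlinarith [le_max_left 1 (γ / δ)]
  · have hr : 1 ≤ γ / δ := (one_le_div hδ).2 h.le
    have hb := one_add_mul_sub_one_le_rpow hr (Real.rpow_nonneg hz0.le δ)
    rw [← Real.rpow_mul hz0.le, mul_div_cancel₀ _ hδ.ne'] at hb
    nlinarith [le_max_right 1 (γ / δ)]

lemma rpow_mem_Icc_min_max {a e z : ℝ} (ha : 0 < a) (hz : z ∈ Icc a 1) :
    min (a ^ e) 1 ≤ z ^ e ∧ z ^ e ≤ max (a ^ e) 1 := by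
  have hz0 : 0 < z := ha.trans_le hz.1
  rcases le_or_gt 0 e with he | he
  · exact ⟨(min_le_left _ _).trans (Real.rpow_le_rpow ha.le hz.1 he),
      (Real.rpow_le_one hz0.le hz.2 he).trans (le_max_right _ _)⟩
  · exact ⟨(min_le_right _ _).trans (Real.one_le_rpow_of_pos_of_le_one_of_nonpos hz0 hz.2 he.le),
      (Real.rpow_le_rpow_of_nonpos ha hz.1 he.le).trans (le_max_left _ _)⟩

variable {p a z : ℝ}

lemma rpow_sub_one_sub_one_le_of_one_le (hp : 1 < p) (hz : 1 ≤ z) :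
    z ^ (p - 1) - 1 ≤ 2 * (z ^ (p - 1) - z ^ (p / 2 - 1)) := by
  have hz0 : 0 < z := by linarith
  have he : z ^ (p / 2) * z ^ (p / 2 - 1) = z ^ (p - 1) := by
    rw [← Real.rpow_add hz0]; ring_nf
  rcases le_or_gt 2 p with h2 | h2
  · have h1 : z ^ (p / 2 - 1) ≤ z ^ (p / 2) := Real.rpow_le_rpow_of_exponent_le hz (by linarith)
    have h2' : 1 ≤ z ^ (p / 2 - 1) := Real.one_le_rpow hz (by linarith)
    nlinarith
  · have h2' : z ^ (p / 2 - 1) ≤ 1 := Real.rpow_le_one_of_one_le_of_nonpos hz (by linarith)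
    have h3 : 1 ≤ z ^ (p - 1) := Real.one_le_rpow hz (by linarith)
    linarith

lemma rpow_sub_one_sub_rpow_le_of_one_le (hp : 1 < p) (hz : 1 ≤ z) :
    z ^ (p - 1) - z ^ (p / 2 - 1) ≤ max 1 (p / (2 * (p - 1))) * (z ^ (p - 1) - 1) := by
  have hz0 : 0 < z := by linarith
  have hA : 1 ≤ z ^ (p - 1) := Real.one_le_rpow hz (by linarith)
  rcases le_or_gt 2 p with h2 | h2
  · have : 1 ≤ z ^ (p / 2 - 1) := Real.one_le_rpow hz (by linarith)
    nlinarith [le_max_left 1 (p / (2 * (p - 1)))]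
  · -- `z ^ e = exp (e * log z) ≥ 1 + e * log z` for both exponents `e`
    set x := Real.log z
    have hlower : x * (p / 2 - 1) + 1 ≤ z ^ (p / 2 - 1) := by
      rw [Real.rpow_def_of_pos hz0]; exact Real.add_one_le_exp _
    have hupper : x * (p - 1) + 1 ≤ z ^ (p - 1) := by
      rw [Real.rpow_def_of_pos hz0]; exact Real.add_one_le_exp _
    have hp1 : p - 1 ≠ 0 := by linarith
    have hK : p / (2 * (p - 1)) = 1 + (2 - p) / (2 * (p - 1)) := by field_simp; ring
    have key : (1 - p / 2) * x ≤ (2 - p) / (2 * (p - 1)) * (z ^ (p - 1) - 1) := by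
      calc (1 - p / 2) * x = (2 - p) / (2 * (p - 1)) * ((p - 1) * x) := by field_simp
        _ ≤ _ := by gcongr; linarith
    nlinarith [le_max_right 1 (p / (2 * (p - 1)))]

lemma rpow_half_sub_one_mul_one_sub (hz0 : 0 < z) :
    z ^ (p / 2 - 1) * (1 - z ^ (p / 2)) = z ^ (p / 2 - 1) - z ^ (p - 1) := by
  rw [mul_one_sub, ← Real.rpow_add hz0]
  ring_nf

lemma one_sub_rpow_sub_one_le_of_mem_Icc (hp : 1 < p) (ha : 0 < a) (hz : z ∈ Icc a 1) :
    1 - z ^ (p - 1) ≤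
      max 1 ((p - 1) / (p / 2)) / min (a ^ (p / 2 - 1)) 1 * (z ^ (p / 2 - 1) - z ^ (p - 1)) := by
  have hz0 : 0 < z := ha.trans_le hz.1
  have hm : 0 < min (a ^ (p / 2 - 1)) 1 := lt_min (Real.rpow_pos_of_pos ha _) one_pos
  have hbound := (rpow_mem_Icc_min_max (e := p / 2 - 1) ha hz).1
  have hsub : 0 ≤ 1 - z ^ (p / 2) := sub_nonneg.2 (Real.rpow_le_one hz0.le hz.2 (by linarith))
  rw [← rpow_half_sub_one_mul_one_sub hz0, div_mul_eq_mul_div, le_div_iff₀ hm]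
  calc (1 - z ^ (p - 1)) * min (a ^ (p / 2 - 1)) 1
      ≤ max 1 ((p - 1) / (p / 2)) * (1 - z ^ (p / 2)) * min (a ^ (p / 2 - 1)) 1 := by
        gcongr
        exact one_sub_rpow_le_mul_one_sub_rpow (by linarith) hz0 hz.2
    _ ≤ max 1 ((p - 1) / (p / 2)) * (z ^ (p / 2 - 1) * (1 - z ^ (p / 2))) := by
        rw [mul_assoc, mul_comm (1 - _)]
        gcongr

lemma rpow_half_sub_one_sub_le_of_mem_Icc (hp : 1 < p) (ha : 0 < a) (hz : z ∈ Icc a 1) :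
    z ^ (p / 2 - 1) - z ^ (p - 1) ≤
      max (a ^ (p / 2 - 1)) 1 * max 1 ((p / 2) / (p - 1)) * (1 - z ^ (p - 1)) := by
  have hz0 : 0 < z := ha.trans_le hz.1
  have hsub : 0 ≤ 1 - z ^ (p / 2) := sub_nonneg.2 (Real.rpow_le_one hz0.le hz.2 (by linarith))
  rw [← rpow_half_sub_one_mul_one_sub hz0, mul_assoc]
  gcongr
  · exact (rpow_mem_Icc_min_max ha hz).2
  · exact one_sub_rpow_le_mul_one_sub_rpow (by linarith) hz0 hz.2

end RpowInequalities

section PositiveHalfLine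

variable {p : ℝ}

lemma hasDerivAt_rpow_sub_one_sub_mul {u : ℝ} (hu : 0 < u) :
    HasDerivAt (fun u : ℝ => u ^ p - 1 - p * (u - 1)) (p * (u ^ (p - 1) - 1)) u := by
  have := ((Real.hasDerivAt_rpow_const (p := p) (Or.inl hu.ne')).sub_const 1).sub
    (((hasDerivAt_id u).sub_const 1).const_mul p)
  exact this.congr_deriv (by rw [mul_one]; ring)

lemma hasDerivAt_rpow_half_sub_one_sq {u : ℝ} (hu : 0 < u) :
    HasDerivAt (fun u : ℝ => (u ^ (p / 2) - 1) ^ 2) (p * (u ^ (p - 1) - u ^ (p / 2 - 1))) u := by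
  have := ((Real.hasDerivAt_rpow_const (p := p / 2) (Or.inl hu.ne')).sub_const 1).pow 2
  have he : u ^ (p / 2) * u ^ (p / 2 - 1) = u ^ (p - 1) := by
    rw [← Real.rpow_add hu]; ring_nf
  refine this.congr_deriv ?_
  push_cast
  linear_combination p * he

lemma isTheta_rpow_sub_one_sub_mul_Icc_zero (hp : 1 < p) {a : ℝ} (ha0 : 0 ≤ a)
    (ha : p * a < p - 1) :
    (fun u : ℝ => u ^ p - 1 - p * (u - 1)) =Θ[𝓟 (Icc 0 a)]
      fun u => (u ^ (p / 2) - 1) ^ 2 := by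
  have ha1 : a < 1 := by nlinarith
  have hapos : 0 < 1 - a ^ (p / 2) := sub_pos.2 (Real.rpow_lt_one ha0 ha1 (by linarith))
  refine isTheta_principal_of_le (c := p / (1 - a ^ (p / 2)) ^ 2) (c' := 1 / (p - 1 - p * a))
    (fun u hu => by linarith [one_add_mul_sub_one_le_rpow hp.le hu.1])
    (fun u _ => sq_nonneg _) (fun u hu => ?_) (fun u hu => ?_)
  all_goals
    have hu1 : u ≤ 1 := hu.2.trans ha1.le
    have hF_le : u ^ p - 1 - p * (u - 1) ≤ p := by
      linarith [Real.rpow_le_one hu.1 hu1 (by linarith : 0 ≤ p),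
        mul_nonneg (by linarith : (0 : ℝ) ≤ p) hu.1]
    have hF_ge : p - 1 - p * a ≤ u ^ p - 1 - p * (u - 1) := by
      nlinarith [Real.rpow_nonneg hu.1 p, hu.2]
    have huhalf : u ^ (p / 2) ≤ a ^ (p / 2) := Real.rpow_le_rpow hu.1 hu.2 (by linarith)
    have huhalf0 : 0 ≤ u ^ (p / 2) := Real.rpow_nonneg hu.1 _
  · rw [div_mul_eq_mul_div, le_div_iff₀ (by positivity)]
    calc (u ^ p - 1 - p * (u - 1)) * (1 - a ^ (p / 2)) ^ 2 ≤ p * (1 - a ^ (p / 2)) ^ 2 := by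
          gcongr
      _ ≤ p * (u ^ (p / 2) - 1) ^ 2 := by
          rw [show (u ^ (p / 2) - 1) ^ 2 = (1 - u ^ (p / 2)) ^ 2 by ring]
          gcongr
  · rw [div_mul_eq_mul_div, one_mul, le_div_iff₀ (by linarith)]
    calc (u ^ (p / 2) - 1) ^ 2 * (p - 1 - p * a) ≤ 1 * (p - 1 - p * a) := by
          gcongr
          nlinarith [mul_nonneg huhalf0 (by linarith : 0 ≤ 2 - u ^ (p / 2))]
      _ ≤ u ^ p - 1 - p * (u - 1) := by linarith

lemma isTheta_rpow_sub_one_sub_mul_Icc_one (hp : 1 < p) {a : ℝ} (ha : 0 < a) :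
    (fun u : ℝ => u ^ p - 1 - p * (u - 1)) =Θ[𝓟 (Icc a 1)]
      fun u => (u ^ (p / 2) - 1) ^ 2 := by
  have hF : ∀ u ∈ Icc a 1, HasDerivAt (fun u : ℝ => u ^ p - 1 - p * (u - 1)) _ u :=
    fun u hu => hasDerivAt_rpow_sub_one_sub_mul (ha.trans_le hu.1)
  have hG : ∀ u ∈ Icc a 1, HasDerivAt (fun u : ℝ => (u ^ (p / 2) - 1) ^ 2) _ u :=
    fun u hu => hasDerivAt_rpow_half_sub_one_sq (ha.trans_le hu.1)
  refine isTheta_principal_of_le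
    (c := max 1 ((p - 1) / (p / 2)) / min (a ^ (p / 2 - 1)) 1)
    (c' := max (a ^ (p / 2 - 1)) 1 * max 1 ((p / 2) / (p - 1)))
    (fun u hu => by linarith [one_add_mul_sub_one_le_rpow hp.le (ha.le.trans hu.1)])
    (fun u _ => sq_nonneg _)
    (le_const_mul_on_Icc_of_hasDerivAt hF hG (by simp) (by simp) fun u hu => ?_)
    (le_const_mul_on_Icc_of_hasDerivAt hG hF (by simp) (by simp) fun u hu => ?_)
  · nlinarith [one_sub_rpow_sub_one_le_of_mem_Icc hp ha (Ioo_subset_Icc_self hu)]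
  · nlinarith [rpow_half_sub_one_sub_le_of_mem_Icc hp ha (Ioo_subset_Icc_self hu)]

lemma isTheta_rpow_sub_one_sub_mul_Ici_one (hp : 1 < p) :
    (fun u : ℝ => u ^ p - 1 - p * (u - 1)) =Θ[𝓟 (Ici 1)] fun u => (u ^ (p / 2) - 1) ^ 2 := by
  have hF : ∀ u ∈ Ici (1 : ℝ), HasDerivAt (fun u : ℝ => u ^ p - 1 - p * (u - 1)) _ u :=
    fun u hu => hasDerivAt_rpow_sub_one_sub_mul (zero_lt_one.trans_le hu)
  have hG : ∀ u ∈ Ici (1 : ℝ), HasDerivAt (fun u : ℝ => (u ^ (p / 2) - 1) ^ 2) _ u :=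
    fun u hu => hasDerivAt_rpow_half_sub_one_sq (zero_lt_one.trans_le hu)
  refine isTheta_principal_of_le (c := 2) (c' := max 1 (p / (2 * (p - 1))))
    (fun u hu => by linarith [one_add_mul_sub_one_le_rpow hp.le (zero_le_one.trans hu)])
    (fun u _ => sq_nonneg _)
    (le_const_mul_on_Ici_of_hasDerivAt hF hG (by simp) (by simp) fun u hu => ?_)
    (le_const_mul_on_Ici_of_hasDerivAt hG hF (by simp) (by simp) fun u hu => ?_)
  · nlinarith [rpow_sub_one_sub_one_le_of_one_le hp (le_of_lt hu)]
  · nlinarith [rpow_sub_one_sub_rpow_le_of_one_le hp (le_of_lt hu)]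

end PositiveHalfLine

section Comparison

variable {p : ℝ}

lemma isTheta_bregmanAbsRpow_one_Iic (hp : 1 < p) :
    bregmanAbsRpow p 1 =Θ[𝓟 (Iic 0)] fun u => (signedRpow (p / 2) u - 1) ^ 2 := by
  have hm : 0 < min 1 (p - 1) := lt_min one_pos (by linarith)
  refine isTheta_principal_of_le (c := 2 * p) (c' := 2 / min 1 (p - 1))
    (fun u _ => bregmanAbsRpow_nonneg hp.le 1 u) (fun u _ => sq_nonneg _)
    (fun u hu => ?_) (fun u hu => ?_)
  all_goals
    have hsigned : signedRpow (p / 2) u = -|u| ^ (p / 2) :=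
      signedRpow_of_nonpos (by linarith) hu
    have hsq : (|u| ^ (p / 2)) ^ 2 = |u| ^ p := by
      rw [← neg_sq, ← hsigned, signedRpow_half_sq (by linarith)]
    have hbernoulli := one_add_mul_sub_one_le_rpow hp.le (abs_nonneg u)
    have hhalf_nonneg := Real.rpow_nonneg (abs_nonneg u) (p / 2)
    have habs : |u| = -u := abs_of_nonpos hu
    rw [bregmanAbsRpow_one_left, hsigned]
  · nlinarith
  · have hG : (-|u| ^ (p / 2) - 1) ^ 2 ≤ 2 * (|u| ^ p + 1) := by
      nlinarith [sq_nonneg (|u| ^ (p / 2) - 1)]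
    have hF : min 1 (p - 1) * (|u| ^ p + 1) ≤ |u| ^ p - 1 - p * (u - 1) := by
      nlinarith [mul_le_mul_of_nonneg_right (min_le_left 1 (p - 1))
        (Real.rpow_nonneg (abs_nonneg u) p), min_le_right 1 (p - 1),
        mul_nonneg (by linarith : (0 : ℝ) ≤ p) (abs_nonneg u)]
    rw [div_mul_eq_mul_div, le_div_iff₀ hm]
    nlinarith [mul_le_mul_of_nonneg_right hG hm.le]

lemma isTheta_rpow_sub_one_sub_mul_Ici_zero (hp : 1 < p) :
    (fun u : ℝ => u ^ p - 1 - p * (u - 1)) =Θ[𝓟 (Ici 0)] fun u => (u ^ (p / 2) - 1) ^ 2 := by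
  have ha : 0 < (p - 1) / (2 * p) := div_pos (by linarith) (by linarith)
  have ha1 : (p - 1) / (2 * p) ≤ 1 := by rw [div_le_one (by linarith)]; linarith
  have hpa : p * ((p - 1) / (2 * p)) < p - 1 := by
    rw [mul_div_assoc', mul_comm 2 p, mul_div_mul_left _ _ (by linarith)]; linarith
  rw [← Icc_union_Ici_eq_Ici zero_le_one, ← Icc_union_Icc_eq_Icc ha.le ha1, ← sup_principal,
    ← sup_principal]
  exact ((isTheta_rpow_sub_one_sub_mul_Icc_zero hp ha.le hpa).sup
    (isTheta_rpow_sub_one_sub_mul_Icc_one hp ha)).sup (isTheta_rpow_sub_one_sub_mul_Ici_one hp)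

theorem isTheta_bregmanAbsRpow_one (hp : 1 < p) :
    bregmanAbsRpow p 1 =Θ[⊤] fun u => (signedRpow (p / 2) u - 1) ^ 2 := by
  have hF : bregmanAbsRpow p 1 =ᶠ[𝓟 (Ici 0)] fun u => u ^ p - 1 - p * (u - 1) :=
    eventually_principal.2 fun u hu => by rw [bregmanAbsRpow_one_left, abs_of_nonneg hu]
  have hG : (fun u : ℝ => (u ^ (p / 2) - 1) ^ 2) =ᶠ[𝓟 (Ici 0)]
      fun u => (signedRpow (p / 2) u - 1) ^ 2 :=
    eventually_principal.2 fun u hu => by dsimp only; rw [signedRpow_of_nonneg (by linarith) hu]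
  rw [← principal_univ, ← Iic_union_Ici (a := (0 : ℝ)), ← sup_principal]
  exact (isTheta_bregmanAbsRpow_one_Iic hp).sup
    (hF.trans_isTheta ((isTheta_rpow_sub_one_sub_mul_Ici_zero hp).trans_eventuallyEq hG))

/-- Both sides are `|w| ^ p` times their values at `(1, z / w)`, and coincide when `w = 0`. -/
theorem isTheta_bregmanAbsRpow (hp : 1 < p) :
    (fun x : ℝ × ℝ => bregmanAbsRpow p x.1 x.2) =Θ[⊤]
      fun x => (signedRpow (p / 2) x.2 - signedRpow (p / 2) x.1) ^ 2 := by
  have hp0 : p ≠ 0 := by linarith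
  have hone := isTheta_bregmanAbsRpow_one hp
  have hscaled : (fun x : ℝ × ℝ => |x.1| ^ p * bregmanAbsRpow p 1 (x.2 / x.1)) =Θ[⊤]
      fun x => |x.1| ^ p * (signedRpow (p / 2) (x.2 / x.1) - 1) ^ 2 :=
    (isTheta_refl _ _).mul ⟨hone.1.comp_tendsto tendsto_top, hone.2.comp_tendsto tendsto_top⟩
  rw [← principal_univ, ← union_compl_self {x : ℝ × ℝ | x.1 = 0}, ← sup_principal]
  refine IsTheta.sup (EventuallyEq.isTheta ?_) ?_
  · refine eventually_principal.2 fun x (hx : x.1 = 0) => ?_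
    dsimp only
    rw [hx, bregmanAbsRpow_zero_left hp0, signedRpow_zero, sub_zero, signedRpow_half_sq hp0]
  · have hF : (fun x : ℝ × ℝ => bregmanAbsRpow p x.1 x.2) =ᶠ[𝓟 {x | x.1 = 0}ᶜ]
        fun x => |x.1| ^ p * bregmanAbsRpow p 1 (x.2 / x.1) :=
      eventually_principal.2 fun x hx => bregmanAbsRpow_eq_mul hx x.2
    have hG : (fun x : ℝ × ℝ => |x.1| ^ p * (signedRpow (p / 2) (x.2 / x.1) - 1) ^ 2)
        =ᶠ[𝓟 {x | x.1 = 0}ᶜ]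
          fun x => (signedRpow (p / 2) x.2 - signedRpow (p / 2) x.1) ^ 2 :=
      eventually_principal.2 fun x hx => (sq_sub_signedRpow_eq_mul hp0 hx x.2).symm
    exact hF.trans_isTheta ((hscaled.mono le_top).trans_eventuallyEq hG)

end Comparison

def QuasiTriangle {α : Type*} (d : α → α → ℝ) (T : ℝ) : Prop :=
  ∀ x y z, d y z ≤ T * (d x y + d x z)

namespace QuasiTriangle

variable {α β : Type*} {d : α → α → ℝ} {T : ℝ}

lemma mono (h : QuasiTriangle d T) (hd : ∀ x y, 0 ≤ d x y) {T' : ℝ} (hT : T ≤ T') :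
    QuasiTriangle d T' := fun x y z =>
  (h x y z).trans (mul_le_mul_of_nonneg_right hT (add_nonneg (hd x y) (hd x z)))

lemma const_mul (h : QuasiTriangle d T) {c : ℝ} (hc : 0 ≤ c) :
    QuasiTriangle (fun x y => c * d x y) T := fun x y z => by
  have := mul_le_mul_of_nonneg_left (h x y z) hc
  linarith

lemma prod {d' : β → β → ℝ} {T' : ℝ} (h : QuasiTriangle d T) (h' : QuasiTriangle d' T')
    (hd : ∀ x y, 0 ≤ d x y) (hd' : ∀ x y, 0 ≤ d' x y) :
    QuasiTriangle (fun x y : α × β => d x.1 y.1 + d' x.2 y.2) (max T T') := fun x y z => by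
  have h₁ := (h.mono hd (le_max_left T T')) x.1 y.1 z.1
  have h₂ := (h'.mono hd' (le_max_right T T')) x.2 y.2 z.2
  linarith

end QuasiTriangle

lemma exists_quasiTriangle_of_isTheta {α : Type*} {d : α → α → ℝ} (g : α → ℝ)
    (hd : ∀ x y, 0 ≤ d x y)
    (h : (fun x : α × α => d x.1 x.2) =Θ[⊤] fun x => (g x.2 - g x.1) ^ 2) :
    ∃ T, QuasiTriangle d T := by
  obtain ⟨C, hC0, hC⟩ := h.1.exists_pos
  obtain ⟨C', -, hC'⟩ := h.2.exists_pos
  simp only [isBigOWith_top, Real.norm_of_nonneg (sq_nonneg _), Real.norm_of_nonneg (hd _ _)]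
    at hC hC'
  refine ⟨2 * C * C', fun x y z => ?_⟩
  calc d y z ≤ C * (g z - g y) ^ 2 := hC (y, z)
    _ ≤ C * (2 * ((g y - g x) ^ 2 + (g z - g x) ^ 2)) := by
        gcongr
        nlinarith [sq_nonneg (g y + g z - 2 * g x)]
    _ ≤ C * (2 * (C' * d x y + C' * d x z)) := by
        gcongr
        · exact hC' (x, y)
        · exact hC' (x, z)
    _ = 2 * C * C' * (d x y + d x z) := by ring

lemma deltaE_nonneg (n : ℕ) (x y : Fin n → ℝ) : 0 ≤ deltaE n x y := by
  unfold deltaE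
  positivity

lemma quasiTriangle_deltaE (n : ℕ) : QuasiTriangle (deltaE n) 2 := fun x y z => by
  unfold deltaE
  have hsum : ∑ i, (z i - y i) ^ 2 ≤ ∑ i, (2 * (y i - x i) ^ 2 + 2 * (z i - x i) ^ 2) :=
    Finset.sum_le_sum fun i _ => by nlinarith [sq_nonneg (y i + z i - 2 * x i)]
  rw [Finset.sum_add_distrib, ← Finset.mul_sum, ← Finset.mul_sum] at hsum
  linarith

lemma deltaH_eq_mul_bregmanAbsRpow {s : ℝ} (hs : s ≠ 0) (z₀ z : ℝ) :
    deltaH s z₀ z = s ^ 2 / (1 - s) * bregmanAbsRpow (1 / s) z₀ z := by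
  rw [deltaH, hFun, hFun, hDeriv, bregmanAbsRpow, signedRpow,
    show 1 / s - 1 - 1 = 1 / s - 2 by ring]
  field_simp

lemma exists_quasiTriangle_deltaPhi (n : ℕ) {s : ℝ} (hs0 : 0 < s) (hs1 : s < 1) :
    ∃ T, 1 ≤ T ∧ QuasiTriangle (deltaPhi n s) T := by
  have hp : 1 < 1 / s := by rw [lt_div_iff₀ hs0]; linarith
  have hc : 0 ≤ s ^ 2 / (1 - s) := div_nonneg (sq_nonneg s) (by linarith)
  have hbregman := bregmanAbsRpow_nonneg hp.le
  obtain ⟨T, hT⟩ := exists_quasiTriangle_of_isTheta _ hbregman (isTheta_bregmanAbsRpow hp)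
  refine ⟨max 2 T, one_le_two.trans (le_max_left _ _), ?_⟩
  have hdeltaH : deltaH s = fun w z => s ^ 2 / (1 - s) * bregmanAbsRpow (1 / s) w z :=
    funext₂ (deltaH_eq_mul_bregmanAbsRpow hs0.ne')
  change QuasiTriangle (fun x y : (Fin n → ℝ) × ℝ => deltaE n x.1 y.1 + deltaH s x.2 y.2) _
  rw [hdeltaH]
  exact (quasiTriangle_deltaE n).prod (hT.const_mul hc) (deltaE_nonneg n)
    fun w z => mul_nonneg hc (hbregman w z)

lemma sectPhi_subset_of_quasiTriangle {n : ℕ} {s T R : ℝ} (hT : QuasiTriangle (deltaPhi n s) T)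
    (hT0 : 0 < T) {p q : (Fin n → ℝ) × ℝ} (hq : q ∈ sectPhi n s R p) :
    sectPhi n s R p ⊆ sectPhi n s (2 * T * R) q := fun r (hr : deltaPhi n s p r < R) =>
  calc deltaPhi n s q r ≤ T * (deltaPhi n s p q + deltaPhi n s p r) := hT p q r
    _ < T * (R + R) := mul_lt_mul_of_pos_left (add_lt_add hq hr) hT0
    _ = 2 * T * R := by ring

end MongeAmpere

theorem phi_engulfing_general
    (n : ℕ) (s : ℝ) (hs0 : 0 < s) (hs1 : s < 1) :
    ∃ θ : ℝ, 1 ≤ θ ∧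
      ∀ (p : (Fin n → ℝ) × ℝ) (R : ℝ), 0 < R →
        ∀ q ∈ sectPhi n s R p, sectPhi n s R p ⊆ sectPhi n s (θ * R) q := by
  obtain ⟨T, hT1, hT⟩ := MongeAmpere.exists_quasiTriangle_deltaPhi n hs0 hs1
  exact ⟨2 * T, by linarith, fun p R _ q hq =>
    MongeAmpere.sectPhi_subset_of_quasiTriangle hT (by linarith) hq⟩

/-- Corollary 4.5(2): `Φ` satisfies the engulfing property. -/
theorem phi_engulfing
    (n : ℕ) (hn : 1 ≤ n) (s : ℝ) (hs0 : 0 < s) (hs1 : s < 1) :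
    ∃ θ : ℝ, 1 ≤ θ ∧
      ∀ (p : (Fin n → ℝ) × ℝ) (R : ℝ), 0 < R →
        ∀ q ∈ sectPhi n s R p, sectPhi n s R p ⊆ sectPhi n s (θ * R) q :=
  phi_engulfing_general n s hs0 hs1
end
end

section
/- Fix m ∈ ℕ and for each j = 1,…,m let ψ_j : ℝ^{n_j} → ℝ be a strictly convex differentiable function. Set n = n₁ + ⋯ + n_m and ψ(x) = Σ_{j=1}^m ψ_j(x_j) for x = (x₁,…,x_m) ∈ ℝⁿ, x_j ∈ ℝ^{n_j}. Then for every x ∈ ℝⁿ and R > 0: S_ψ(x,R) ⊂ ∏_{j=1}^m S_{ψ_j}(x_j,R) ⊂ S_ψ(x,mR). Moreover, if each ψ_j satisfies the engulfing property with constant θ_j, then ψ satisfies the engulfing property with constant θ = m · max_j θ_j; conversely, if ψ satisfies the engulfing property with constant θ > 1, then each ψ_j satisfies the engulfing property with constant θ. -/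
/-!
The Monge–Ampère quasi-distance of `ψ(y) = ∑ⱼ ψⱼ(yⱼ)` splits as `δ_ψ(x, q) = ∑ⱼ δ_{ψⱼ}(xⱼ, qⱼ)`,
a sum of nonnegative terms by convexity. Hence a term is at most the sum, and the sum of
`m` terms below `R` is below `mR`: this gives both inclusions, and chaining them with the
engulfing property of each factor gives engulfing for `ψ` with constant `m · maxⱼ θⱼ`.
Conversely, moving only the `j`-th coordinate of a point whose other coordinates are fixed
does not change the other terms, so the sections of `ψⱼ` sit inside those of `ψ`.
-/

open Set

noncomputable section

/-- Monge–Ampère quasi-distance of a differentiable function `ψ`. -/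
def gDelta {E : Type*} [NormedAddCommGroup E] [NormedSpace ℝ E]
    (ψ : E → ℝ) (p q : E) : ℝ :=
  ψ q - ψ p - fderiv ℝ ψ p (q - p)

/-- Monge–Ampère section of `ψ` of radius `R` centered at `p`. -/
def gSect {E : Type*} [NormedAddCommGroup E] [NormedSpace ℝ E]
    (ψ : E → ℝ) (p : E) (R : ℝ) : Set E :=
  {q | gDelta ψ p q < R}

/-- `ψ` satisfies the engulfing property with constant `θ`. -/
def Engulfs {E : Type*} [NormedAddCommGroup E] [NormedSpace ℝ E]
    (ψ : E → ℝ) (θ : ℝ) : Prop :=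
  ∀ (p : E) (R : ℝ), 0 < R → ∀ q ∈ gSect ψ p R, gSect ψ p R ⊆ gSect ψ q (θ * R)

open Function

section

variable {E : Type*} [NormedAddCommGroup E] [NormedSpace ℝ E]

lemma gDelta_self (ψ : E → ℝ) (p : E) : gDelta ψ p p = 0 := by
  simp [gDelta]

lemma gDelta_nonneg {f : E → ℝ} {p : E} (hd : DifferentiableAt ℝ f p)
    (hc : ConvexOn ℝ univ f) (q : E) : 0 ≤ gDelta f p q := by
  set L : ℝ →ᵃ[ℝ] E := AffineMap.lineMap p q with hL
  have hderiv : HasDerivAt (f ∘ L) (fderiv ℝ f p (q - p)) 0 := by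
    have hfp : HasFDerivAt f (fderiv ℝ f p) (L 0) := by
      simpa [hL] using hd.hasFDerivAt
    exact hfp.comp_hasDerivAt 0 AffineMap.hasDerivAt_lineMap
  have hslope := (hc.comp_affineMap L).le_slope_of_hasDerivAt (mem_univ 0) (mem_univ 1)
    one_pos hderiv
  simp only [slope, comp_apply, hL, AffineMap.lineMap_apply_zero, AffineMap.lineMap_apply_one,
    sub_zero, inv_one, one_smul, vsub_eq_sub] at hslope
  simp only [gDelta]
  linarith

lemma Engulfs.mono {f : E → ℝ} {θ θ' : ℝ} (h : Engulfs f θ) (hθ : θ ≤ θ') :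
    Engulfs f θ' := fun p R hR q hq _ hz =>
  lt_of_lt_of_le (h p R hR q hq hz) (mul_le_mul_of_nonneg_right hθ hR.le)

end

section SeparatedSum

variable {ι : Type*} [Fintype ι] {E : ι → Type*} [∀ i, NormedAddCommGroup (E i)]
  [∀ i, NormedSpace ℝ (E i)] {f : ∀ i, E i → ℝ}

lemma gDelta_sum {x : ∀ i, E i} (hd : ∀ i, DifferentiableAt ℝ (f i) (x i)) (q : ∀ i, E i) :
    gDelta (fun y : ∀ i, E i => ∑ i, f i (y i)) x q = ∑ i, gDelta (f i) (x i) (q i) := by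
  have hF : HasFDerivAt (fun y : ∀ i, E i => ∑ i, f i (y i))
      (∑ i, (fderiv ℝ (f i) (x i)).comp (ContinuousLinearMap.proj i)) x :=
    HasFDerivAt.fun_sum fun i _ =>
      (hd i).hasFDerivAt.comp x (ContinuousLinearMap.proj (R := ℝ) (φ := E) i).hasFDerivAt
  simp only [gDelta, hF.fderiv, sum_apply, ContinuousLinearMap.comp_apply,
    ContinuousLinearMap.proj_apply, Pi.sub_apply, Finset.sum_sub_distrib]

lemma gSect_sum_subset (hd : ∀ i, Differentiable ℝ (f i)) (hc : ∀ i, ConvexOn ℝ univ (f i))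
    (x : ∀ i, E i) (R : ℝ) :
    gSect (fun y : ∀ i, E i => ∑ i, f i (y i)) x R ⊆ {q | ∀ i, q i ∈ gSect (f i) (x i) R} := by
  intro q hq j
  have hsum : ∑ i, gDelta (f i) (x i) (q i) < R := by
    rwa [gSect, mem_ofPred_eq, gDelta_sum fun i => hd i _] at hq
  exact lt_of_le_of_lt
    (Finset.single_le_sum (fun i _ => gDelta_nonneg (hd i _) (hc i) (q i)) (Finset.mem_univ j))
    hsum

lemma subset_gSect_sum [Nonempty ι] (hd : ∀ i, Differentiable ℝ (f i)) (x : ∀ i, E i)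
    (R : ℝ) :
    {q | ∀ i, q i ∈ gSect (f i) (x i) R} ⊆
      gSect (fun y : ∀ i, E i => ∑ i, f i (y i)) x (Fintype.card ι * R) := by
  intro q hq
  have hsum : ∑ i, gDelta (f i) (x i) (q i) < ∑ _i : ι, R :=
    Finset.sum_lt_sum_of_nonempty Finset.univ_nonempty fun i _ => hq i
  rwa [Finset.sum_const, Finset.card_univ, nsmul_eq_mul, ← gDelta_sum fun i => hd i _] at hsum

lemma Engulfs.sum [Nonempty ι] (hd : ∀ i, Differentiable ℝ (f i))
    (hc : ∀ i, ConvexOn ℝ univ (f i)) {θ : ℝ} (h : ∀ i, Engulfs (f i) θ) :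
    Engulfs (fun y : ∀ i, E i => ∑ i, f i (y i)) (Fintype.card ι * θ) := by
  intro x R hR q hq z hz
  have hqi := gSect_sum_subset hd hc x R hq
  have hzi := gSect_sum_subset hd hc x R hz
  rw [mul_assoc]
  exact subset_gSect_sum hd q (θ * R) fun i => h i (x i) R hR (q i) (hqi i) (hzi i)

lemma gDelta_sum_update [DecidableEq ι] (hd : ∀ i, Differentiable ℝ (f i)) (b : ∀ i, E i)
    (j : ι) (u v : E j) :
    gDelta (fun y : ∀ i, E i => ∑ i, f i (y i)) (update b j u) (update b j v) =
      gDelta (f j) u v := by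
  rw [gDelta_sum fun i => hd i _, Finset.sum_eq_single j]
  · simp
  · intro i _ hij
    rw [update_of_ne hij, update_of_ne hij, gDelta_self]
  · exact fun hj => absurd (Finset.mem_univ j) hj

lemma Engulfs.of_sum (hd : ∀ i, Differentiable ℝ (f i)) {θ : ℝ}
    (h : Engulfs (fun y : ∀ i, E i => ∑ i, f i (y i)) θ) (j : ι) : Engulfs (f j) θ := by
  classical
  intro p R hR q hq z hz
  have hδ := gDelta_sum_update hd 0 j
  simp only [gSect, mem_ofPred_eq, ← hδ] at hq hz ⊢
  exact h (update 0 j p) R hR (update 0 j q) hq hz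

end SeparatedSum

/-- Lemma 4.6: sections of a sum of strictly convex functions in
separated variables are comparable to products of sections, and the engulfing property
tensorizes. -/
theorem tensor_sections_engulfing
    (m : ℕ) (hm : 1 ≤ m) (nd : Fin m → ℕ)
    (ψ : ∀ j, (Fin (nd j) → ℝ) → ℝ)
    (hdiff : ∀ j, Differentiable ℝ (ψ j))
    (hconv : ∀ j, StrictConvexOn ℝ (univ : Set (Fin (nd j) → ℝ)) (ψ j)) :
    (∀ (x : ∀ j, Fin (nd j) → ℝ) (R : ℝ), 0 < R →
      gSect (fun y : ∀ j, Fin (nd j) → ℝ => ∑ j, ψ j (y j)) x R ⊆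
          {q : ∀ j, Fin (nd j) → ℝ | ∀ j, q j ∈ gSect (ψ j) (x j) R} ∧
        {q : ∀ j, Fin (nd j) → ℝ | ∀ j, q j ∈ gSect (ψ j) (x j) R} ⊆
          gSect (fun y : ∀ j, Fin (nd j) → ℝ => ∑ j, ψ j (y j)) x ((m : ℝ) * R)) ∧
    (∀ (θ : Fin m → ℝ) (θ₀ : ℝ), (∀ j, 1 ≤ θ j) → (∀ j, θ j ≤ θ₀) →
      (∀ j, Engulfs (ψ j) (θ j)) →
      Engulfs (fun y : ∀ j, Fin (nd j) → ℝ => ∑ j, ψ j (y j)) ((m : ℝ) * θ₀)) ∧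
    (∀ θ : ℝ, 1 < θ →
      Engulfs (fun y : ∀ j, Fin (nd j) → ℝ => ∑ j, ψ j (y j)) θ →
      ∀ j, Engulfs (ψ j) θ) := by
  have : Nonempty (Fin m) := ⟨⟨0, hm⟩⟩
  have hc : ∀ j, ConvexOn ℝ univ (ψ j) := fun j => (hconv j).convexOn
  refine ⟨fun x R _ => ⟨gSect_sum_subset hdiff hc x R, ?_⟩,
    fun θ θ₀ _ hθ₀ heng => ?_, fun θ _ heng => Engulfs.of_sum hdiff heng⟩
  · simpa using subset_gSect_sum hdiff x R
  · simpa using Engulfs.sum hdiff hc fun j => (heng j).mono (hθ₀ j)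
end
end

section
/- Let 0 < s ≤ 1/2 and fix z₀ > 0. Then for every z > 0 with z ≠ z₀, ( h'(z) - h'(z₀) )² ≥ δ_h(z₀,z) · h''(z), i.e. the quotient Q(z) = (h'(z) - h'(z₀))² / ( δ_h(z₀,z) h''(z) ) satisfies Q(z) ≥ 1 for all z > 0, z ≠ z₀; moreover Q extends continuously to z = z₀ with value 2 (so Q is a continuous function of z > 0). -/
open Set MeasureTheory
open scoped ENNReal

noncomputable section

/-!
For `z > 0` write `p = 1/s ≥ 2`, so that `h''(z) = z^{p-2}` and `h'(z) = z^{p-1}/(p-1)`.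
The gap `F(z) = (h'(z) - h'(z₀))² - δ_h(z₀,z) h''(z)` vanishes at `z₀`, and
`F'(z) = z^{p-3} (z (h'(z) - h'(z₀)) - (p-2) δ_h(z₀,z))`. Euler's identity `h(z) = s z h'(z)`
turns the bracket into `2 s z (h'(z) - h'(z₀)) + (1-2s)(1-s)/s · h'(z₀) (z - z₀)`, which has
the sign of `z - z₀` since `h'` is increasing and `s ≤ 1/2`; hence `F ≥ F(z₀) = 0`.
Near `z₀`, L'Hôpital gives `δ_h(z₀,z)/(z-z₀)² → h''(z₀)/2`, so the quotient tends to
`h''(z₀)² / (h''(z₀)/2 · h''(z₀)) = 2`.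
-/

open Filter Topology

theorem isMinOn_of_hasDerivAt_mul_sub_nonneg {f f' : ℝ → ℝ} {S : Set ℝ} {a : ℝ}
    (hS : Convex ℝ S) (ha : a ∈ S) (hf : ∀ x ∈ S, HasDerivAt f (f' x) x)
    (hsign : ∀ x ∈ S, 0 ≤ f' x * (x - a)) : IsMinOn f S a := by
  refine isMinOn_iff.2 fun x hx => ?_
  have hcont : ContinuousOn f S := fun y hy => (hf y hy).continuousAt.continuousWithinAt
  rcases le_total a x with hax | hxa
  · have hsub : Icc a x ⊆ S := hS.ordConnected.out ha hx
    refine monotoneOn_of_hasDerivWithinAt_nonneg (f' := f') (convex_Icc a x) (hcont.mono hsub)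
      (fun y hy => ?_) (fun y hy => ?_) (left_mem_Icc.2 hax) (right_mem_Icc.2 hax) hax <;>
      rw [interior_Icc] at hy
    · exact (hf y (hsub (Ioo_subset_Icc_self hy))).hasDerivWithinAt
    · exact nonneg_of_mul_nonneg_left (hsign y (hsub (Ioo_subset_Icc_self hy))) (sub_pos.2 hy.1)
  · have hsub : Icc x a ⊆ S := hS.ordConnected.out hx ha
    refine antitoneOn_of_hasDerivWithinAt_nonpos (f' := f') (convex_Icc x a) (hcont.mono hsub)
      (fun y hy => ?_) (fun y hy => ?_) (left_mem_Icc.2 hxa) (right_mem_Icc.2 hxa) hxa <;>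
      rw [interior_Icc] at hy
    · exact (hf y (hsub (Ioo_subset_Icc_self hy))).hasDerivWithinAt
    · exact nonpos_of_mul_nonneg_left (hsign y (hsub (Ioo_subset_Icc_self hy))) (sub_neg.2 hy.2)

theorem StrictConvexOn.add_mul_sub_lt {f : ℝ → ℝ} {S : Set ℝ} {x y f' : ℝ}
    (hf : StrictConvexOn ℝ S f) (hx : x ∈ S) (hy : y ∈ S) (hxy : x ≠ y)
    (hf' : HasDerivAt f f' x) : f x + f' * (y - x) < f y := by
  rcases hxy.lt_or_gt with h | h
  · have := hf.lt_slope_of_hasDerivAt hx hy h hf'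
    rw [slope_def_field, lt_div_iff₀ (sub_pos.2 h)] at this
    linarith
  · have := hf.slope_lt_of_hasDerivAt hy hx h hf'
    rw [slope_def_field, div_lt_iff₀ (sub_pos.2 h)] at this
    linarith

theorem HasDerivAt.tendsto_sub_sub_mul_div_sq {f f' : ℝ → ℝ} {a c : ℝ}
    (hf' : HasDerivAt f' c a) (hf : ∀ᶠ x in 𝓝 a, HasDerivAt f (f' x) x) :
    Tendsto (fun x => (f x - f a - f' a * (x - a)) / (x - a) ^ 2) (𝓝[≠] a) (𝓝 (c / 2)) := by
  have hnum : ∀ x, HasDerivAt f (f' x) x →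
      HasDerivAt (fun x => f x - f a - f' a * (x - a)) (f' x - f' a) x := fun x hx =>
    ((hx.sub_const (f a)).sub (((hasDerivAt_id' x).sub_const a).const_mul (f' a))).congr_deriv
      (by ring)
  have hden : ∀ x, HasDerivAt (fun x => (x - a) ^ 2) (2 * (x - a)) x := fun x => by
    simpa using ((hasDerivAt_id' x).sub_const a).fun_pow 2
  have hnum0 : Tendsto (fun x => f x - f a - f' a * (x - a)) (𝓝[≠] a) (𝓝 0) := by
    simpa using ((hnum a hf.self_of_nhds).continuousAt.tendsto).mono_left nhdsWithin_le_nhds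
  have hden0 : Tendsto (fun x => (x - a) ^ 2) (𝓝[≠] a) (𝓝 0) := by
    simpa using ((hden a).continuousAt.tendsto).mono_left nhdsWithin_le_nhds
  have hslope : Tendsto (fun x => (f' x - f' a) / (2 * (x - a))) (𝓝[≠] a) (𝓝 (c / 2)) :=
    (hf'.tendsto_slope.div_const 2).congr fun x => by rw [slope_def_field, div_div, mul_comm]
  exact HasDerivAt.lhopital_zero_nhdsNE ((hf.filter_mono nhdsWithin_le_nhds).mono hnum)
    (.of_forall hden)
    (eventually_mem_nhdsWithin.mono fun x hx => mul_ne_zero two_ne_zero (sub_ne_zero.2 hx))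
    hnum0 hden0 hslope

theorem HasDerivAt.tendsto_sq_sub_div_sub_sub_mul_mul {f f' f'' : ℝ → ℝ} {a : ℝ}
    (hf' : HasDerivAt f' (f'' a) a) (hf'' : ContinuousAt f'' a) (ha : f'' a ≠ 0)
    (hf : ∀ᶠ x in 𝓝 a, HasDerivAt f (f' x) x) :
    Tendsto (fun x => (f' x - f' a) ^ 2 / ((f x - f a - f' a * (x - a)) * f'' x))
      (𝓝[≠] a) (𝓝 2) := by
  have hslope : Tendsto (fun x => (f' x - f' a) / (x - a)) (𝓝[≠] a) (𝓝 (f'' a)) :=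
    hf'.tendsto_slope.congr fun x => slope_def_field f' a x
  have hlim := (hslope.pow 2).div
    ((hf'.tendsto_sub_sub_mul_div_sq hf).mul (hf''.tendsto.mono_left nhdsWithin_le_nhds))
    (mul_ne_zero (div_ne_zero ha two_ne_zero) ha)
  rw [show f'' a ^ 2 / (f'' a / 2 * f'' a) = 2 by field_simp] at hlim
  refine hlim.congr' (eventually_mem_nhdsWithin.mono fun x hx => ?_)
  rw [Pi.div_apply, div_pow, div_mul_eq_mul_div,
    div_div_div_cancel_right₀ (pow_ne_zero 2 (sub_ne_zero.2 hx))]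

section PowerFunction

variable {s a z : ℝ}

lemma hFun_of_pos (hz : 0 < z) : hFun s z = s ^ 2 / (1 - s) * z ^ (1 / s) := by
  rw [hFun, abs_of_pos hz]

lemma hDeriv_of_pos (hz : 0 < z) : hDeriv s z = s / (1 - s) * z ^ (1 / s - 1) := by
  rw [hDeriv, abs_of_pos hz, show 1 / s - 1 = 1 / s - 2 + 1 by ring,
    Real.rpow_add_one hz.ne', mul_assoc]

lemma hFun_eq_mul_hDeriv (hs : s ≠ 0) (hz : 0 < z) : hFun s z = s * z * hDeriv s z := by
  rw [hFun_of_pos hz, hDeriv_of_pos hz, Real.rpow_sub_one hz.ne']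
  field_simp

lemma hasDerivAt_hFun (hs : s ≠ 0) (hz : 0 < z) : HasDerivAt (hFun s) (hDeriv s z) z := by
  have ev : hFun s =ᶠ[𝓝 z] fun w => s ^ 2 / (1 - s) * w ^ (1 / s) :=
    (eventually_gt_nhds hz).mono fun w hw => hFun_of_pos hw
  refine (((Real.hasDerivAt_rpow_const (Or.inl hz.ne')).const_mul _).congr_of_eventuallyEq
    ev).congr_deriv ?_
  rw [hDeriv_of_pos hz]
  field_simp

lemma hasDerivAt_hDeriv (hs : s ≠ 0) (hs1 : s ≠ 1) (hz : 0 < z) :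
    HasDerivAt (hDeriv s) (z ^ (1 / s - 2)) z := by
  have ev : hDeriv s =ᶠ[𝓝 z] fun w => s / (1 - s) * w ^ (1 / s - 1) :=
    (eventually_gt_nhds hz).mono fun w hw => hDeriv_of_pos hw
  refine (((Real.hasDerivAt_rpow_const (Or.inl hz.ne')).const_mul _).congr_of_eventuallyEq
    ev).congr_deriv ?_
  have : 1 - s ≠ 0 := sub_ne_zero.2 hs1.symm
  rw [show 1 / s - 1 - 1 = 1 / s - 2 by ring]
  field_simp

lemma hasDerivAt_deltaH (hs : s ≠ 0) (hz : 0 < z) :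
    HasDerivAt (deltaH s a) (hDeriv s z - hDeriv s a) z :=
  (((hasDerivAt_hFun hs hz).sub_const _).sub
    (((hasDerivAt_id z).sub_const a).const_mul _)).congr_deriv (by ring)

lemma strictMonoOn_hDeriv (hs0 : 0 < s) (hs1 : s < 1) : StrictMonoOn (hDeriv s) (Ioi 0) :=
  fun x hx y hy hxy => by
    rw [hDeriv_of_pos hx, hDeriv_of_pos hy]
    exact mul_lt_mul_of_pos_left
      (Real.rpow_lt_rpow (le_of_lt hx) hxy (sub_pos.2 (one_lt_one_div hs0 hs1)))
      (div_pos hs0 (sub_pos.2 hs1))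

lemma strictConvexOn_hFun (hs0 : 0 < s) (hs1 : s < 1) : StrictConvexOn ℝ (Ioi 0) (hFun s) := by
  refine StrictMonoOn.strictConvexOn_of_deriv (convex_Ioi 0)
    (fun z hz => (hasDerivAt_hFun hs0.ne' hz).continuousAt.continuousWithinAt) ?_
  rw [interior_Ioi]
  exact (strictMonoOn_hDeriv hs0 hs1).congr fun z hz => (hasDerivAt_hFun hs0.ne' hz).deriv.symm

lemma deltaH_pos (hs0 : 0 < s) (hs1 : s < 1) (ha : 0 < a) (hz : 0 < z) (hza : z ≠ a) :
    0 < deltaH s a z := by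
  have := (strictConvexOn_hFun hs0 hs1).add_mul_sub_lt ha hz hza.symm (hasDerivAt_hFun hs0.ne' ha)
  rw [deltaH]
  linarith

theorem deltaH_mul_rpow_le_sq (hs0 : 0 < s) (hs : s ≤ 1 / 2) (ha : 0 < a) (hz : 0 < z) :
    deltaH s a z * z ^ (1 / s - 2) ≤ (hDeriv s z - hDeriv s a) ^ 2 := by
  have hs1 : s < 1 := by linarith
  set F' : ℝ → ℝ := fun y => (hDeriv s y - hDeriv s a) * y ^ (1 / s - 2)
    - (1 / s - 2) * y ^ (1 / s - 2 - 1) * deltaH s a y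
  have hF : ∀ y ∈ Ioi (0 : ℝ), HasDerivAt
      (fun y => (hDeriv s y - hDeriv s a) ^ 2 - deltaH s a y * y ^ (1 / s - 2)) (F' y) y := by
    intro y hy
    refine ((((hasDerivAt_hDeriv hs0.ne' hs1.ne hy).sub_const (hDeriv s a)).fun_pow 2).sub
      ((hasDerivAt_deltaH hs0.ne' hy).mul
        (Real.hasDerivAt_rpow_const (Or.inl hy.ne')))).congr_deriv ?_
    simp only [F']
    ring
  have hsign : ∀ y ∈ Ioi (0 : ℝ), 0 ≤ F' y * (y - a) := by
    intro y (hy : 0 < y)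
    have hF'_mul : F' y * (y - a) = y ^ (1 / s - 2 - 1) *
        (2 * s * y * ((hDeriv s y - hDeriv s a) * (y - a))
          + (1 - 2 * s) * (1 - s) / s * hDeriv s a * (y - a) ^ 2) := by
      simp only [F']
      rw [deltaH, hFun_eq_mul_hDeriv hs0.ne' hy, hFun_eq_mul_hDeriv hs0.ne' ha,
        Real.rpow_sub_one hy.ne']
      field_simp
      ring
    have hmono : 0 ≤ (hDeriv s y - hDeriv s a) * (y - a) := by
      rcases le_total y a with h | h
      · exact mul_nonneg_of_nonpos_of_nonpos
          (sub_nonpos.2 ((strictMonoOn_hDeriv hs0 hs1).monotoneOn hy ha h)) (sub_nonpos.2 h)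
      · exact mul_nonneg
          (sub_nonneg.2 ((strictMonoOn_hDeriv hs0 hs1).monotoneOn ha hy h)) (sub_nonneg.2 h)
    have hcoef : 0 ≤ (1 - 2 * s) * (1 - s) / s * hDeriv s a := by
      rw [hDeriv_of_pos ha]
      have : 0 ≤ 1 - 2 * s := by linarith
      have : 0 < 1 - s := by linarith
      positivity
    rw [hF'_mul]
    exact mul_nonneg (by positivity) (add_nonneg (mul_nonneg (by positivity) hmono)
      (mul_nonneg hcoef (sq_nonneg _)))
  have := isMinOn_iff.1 (isMinOn_of_hasDerivAt_mul_sub_nonneg (convex_Ioi 0) ha hF hsign) z hz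
  have hδ : deltaH s a a = 0 := by simp [deltaH]
  exact sub_nonneg.1 (by simpa [hδ] using this)

-- The quotient `Q`; at `z = z₀` it is `0 / 0 = 0`, not the limit value `2`.
def hQuotient (s z₀ z : ℝ) : ℝ :=
  (hDeriv s z - hDeriv s z₀) ^ 2 / (deltaH s z₀ z * z ^ (1 / s - 2))

lemma continuousAt_hQuotient (hs0 : 0 < s) (hs1 : s < 1) (ha : 0 < a) (hz : 0 < z)
    (hza : z ≠ a) : ContinuousAt (hQuotient s a) z :=
  (((hasDerivAt_hDeriv hs0.ne' hs1.ne hz).continuousAt.sub continuousAt_const).pow 2).div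
    ((hasDerivAt_deltaH hs0.ne' hz).continuousAt.mul
      (Real.continuousAt_rpow_const _ _ (Or.inl hz.ne')))
    (mul_pos (deltaH_pos hs0 hs1 ha hz hza) (Real.rpow_pos_of_pos hz _)).ne'

lemma tendsto_hQuotient (hs0 : 0 < s) (hs1 : s < 1) (ha : 0 < a) :
    Tendsto (hQuotient s a) (𝓝[≠] a) (𝓝 2) :=
  HasDerivAt.tendsto_sq_sub_div_sub_sub_mul_mul (f'' := fun z => z ^ (1 / s - 2))
    (hasDerivAt_hDeriv hs0.ne' hs1.ne ha) (Real.continuousAt_rpow_const _ _ (Or.inl ha.ne'))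
    (Real.rpow_pos_of_pos ha _).ne'
    ((eventually_gt_nhds ha).mono fun _ hz => hasDerivAt_hFun hs0.ne' hz)

end PowerFunction

/-- Lemma 7.1: for `0 < s ≤ 1/2` and `z₀ > 0`, the quotient
`Q(z) = (h'(z) - h'(z₀))² / (δ_h(z₀,z) h''(z))` satisfies `Q ≥ 1` for `z > 0`, and
extends continuously to `z = z₀` with value `2`. -/
theorem quotient_ge_one
    (s : ℝ) (hs0 : 0 < s) (hs : s ≤ 1 / 2) (z₀ : ℝ) (hz₀ : 0 < z₀) :
    (∀ z : ℝ, 0 < z → z ≠ z₀ →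
      deltaH s z₀ z * z ^ (1 / s - 2) ≤ (hDeriv s z - hDeriv s z₀) ^ 2) ∧
    (∀ z : ℝ, 0 < z →
      1 ≤ (if z = z₀ then (2 : ℝ)
        else (hDeriv s z - hDeriv s z₀) ^ 2 / (deltaH s z₀ z * z ^ (1 / s - 2)))) ∧
    ContinuousOn
      (fun z : ℝ => if z = z₀ then (2 : ℝ)
        else (hDeriv s z - hDeriv s z₀) ^ 2 / (deltaH s z₀ z * z ^ (1 / s - 2)))
      (Ioi (0 : ℝ)) := by
  have hs1 : s < 1 := by linarith
  have hQ : (fun z : ℝ => if z = z₀ then (2 : ℝ)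
      else (hDeriv s z - hDeriv s z₀) ^ 2 / (deltaH s z₀ z * z ^ (1 / s - 2))) =
      Function.update (hQuotient s z₀) z₀ 2 := by
    funext z
    rw [Function.update_apply, hQuotient]
  refine ⟨fun z hz _ => deltaH_mul_rpow_le_sq hs0 hs hz₀ hz, fun z hz => ?_, ?_⟩
  · split_ifs with hzz₀
    · norm_num
    · have hden : 0 < deltaH s z₀ z * z ^ (1 / s - 2) :=
        mul_pos (deltaH_pos hs0 hs1 hz₀ hz hzz₀) (Real.rpow_pos_of_pos hz _)
      exact (one_le_div hden).2 (deltaH_mul_rpow_le_sq hs0 hs hz₀ hz)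
  · rw [hQ]
    intro z (hz : 0 < z)
    rcases eq_or_ne z z₀ with rfl | hzz₀
    · exact (continuousAt_update_same.2 (tendsto_hQuotient hs0 hs1 hz)).continuousWithinAt
    · exact ((continuousAt_update_of_ne hzz₀).2
        (continuousAt_hQuotient hs0 hs1 hz₀ hz hzz₀)).continuousWithinAt
end
end

section
/- Let S ⊂ ℝ^{n+1} be an open convex set that is symmetric across {z=0}, and let U : S → ℝ be a continuous function symmetric across {z=0} (i.e. U(x,-z) = U(x,z)). Let P be a paraboloid of opening a > 0 with vertex (x_v,z_v) that touches U from below at (x₀,z₀) in S. If z₀ > 0 then z_v ≥ 0, and if z₀ < 0 then z_v ≤ 0. Moreover, the function P̃(x,z) = P(x,-z) is a paraboloid of opening a with vertex (x_v,-z_v) that touches U from below at (x₀,-z₀) in S. -/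
open Set MeasureTheory
open scoped ENNReal

noncomputable section

/-- Lemma 6.4: if `U` is symmetric across `{z=0}` and a paraboloid with
vertex `(x_v,z_v)` touches `U` from below at `(x₀,z₀)`, then the sign of `z_v` matches that
of `z₀`, and the reflected paraboloid touches `U` from below at `(x₀,-z₀)`. -/
theorem touching_symmetric
    (n : ℕ) (hn : 1 ≤ n) (s : ℝ) (hs0 : 0 < s) (hs1 : s < 1)
    (S : Set ((Fin n → ℝ) × ℝ)) (hSo : IsOpen S) (hSc : Convex ℝ S)
    (hSsym : ∀ p : (Fin n → ℝ) × ℝ, p ∈ S → (p.1, -p.2) ∈ S)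
    (U : (Fin n → ℝ) × ℝ → ℝ) (hUc : ContinuousOn U S)
    (hUsym : ∀ (x : Fin n → ℝ) (z : ℝ), (x, z) ∈ S → U (x, -z) = U (x, z))
    (a : ℝ) (ha : 0 < a) (xv : Fin n → ℝ) (zv : ℝ)
    (P : (Fin n → ℝ) × ℝ → ℝ) (hP : IsParaboloid n s a (xv, zv) P)
    (x₀ : Fin n → ℝ) (z₀ : ℝ) (hmem : (x₀, z₀) ∈ S)
    (htouch : TouchesBelow n P U S (x₀, z₀)) :
    (0 < z₀ → 0 ≤ zv) ∧ (z₀ < 0 → zv ≤ 0) ∧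
    IsParaboloid n s a (xv, -zv) (fun p => P (p.1, -p.2)) ∧
    TouchesBelow n (fun p => P (p.1, -p.2)) U S (x₀, -z₀) := by
  obtain ⟨c, hc⟩ := hP
  have h1s : 0 < 1 - s := by linarith
  have hFeven : ∀ z, hFun s (-z) = hFun s z := by
    intro z; simp [hFun, abs_neg]
  have hDodd : ∀ z, hDeriv s (-z) = -hDeriv s z := by
    intro z; simp only [hDeriv, abs_neg]; ring
  have hDH : ∀ w z : ℝ, deltaH s (-w) (-z) = deltaH s w z := by
    intro w z
    simp only [deltaH, hFeven, hDodd]; ring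
  have hmem' := hSsym _ hmem
  have key : 0 ≤ z₀ * hDeriv s zv := by
    have h1 : P (x₀, -z₀) ≤ U (x₀, -z₀) := htouch.2 _ hmem'
    have h2 : U (x₀, -z₀) = U (x₀, z₀) := hUsym x₀ z₀ hmem
    have h3 : P (x₀, -z₀) ≤ P (x₀, z₀) := by
      rw [htouch.1]; linarith
    rw [hc, hc] at h3
    simp only [deltaPhi] at h3
    have h4 : deltaH s zv z₀ ≤ deltaH s zv (-z₀) := by nlinarith
    simp only [deltaH, hFeven] at h4
    nlinarith
  have signD : ∀ z : ℝ, z < 0 → hDeriv s z < 0 := by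
    intro z hz
    have hp1 : 0 < s / (1 - s) := div_pos hs0 h1s
    have hp2 : 0 < |z| ^ (1/s - 2) := Real.rpow_pos_of_pos (abs_pos.mpr hz.ne) _
    have := mul_pos hp1 hp2
    unfold hDeriv
    nlinarith
  have signD' : ∀ z : ℝ, 0 < z → 0 < hDeriv s z := by
    intro z hz
    have := signD (-z) (by linarith)
    rw [hDodd] at this; linarith
  refine ⟨?_, ?_, ?_, ?_⟩
  · intro h0; by_contra h; push_neg at h
    have := signD zv h
    nlinarith
  · intro h0; by_contra h; push_neg at h
    have := signD' zv h
    nlinarith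
  · refine ⟨c, fun p => ?_⟩
    have : deltaH s (-zv) p.2 = deltaH s zv (-p.2) := by
      have := hDH zv (-p.2); rwa [neg_neg] at this
    show P (p.1, -p.2) = _
    rw [hc]
    simp only [deltaPhi, this]
  · constructor
    · show P (x₀, -(-z₀)) = U (x₀, -z₀)
      rw [neg_neg, htouch.1, hUsym x₀ z₀ hmem]
    · intro p hp
      have h1 : P (p.1, -p.2) ≤ U (p.1, -p.2) := htouch.2 _ (hSsym p hp)
      have h2 : U (p.1, -p.2) = U (p.1, p.2) := hUsym p.1 p.2 hp
      calc P (p.1, -p.2) ≤ U (p.1, -p.2) := h1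
        _ = U p := h2
end
end

section
/- Let Ω ⊂ ℝⁿ be a bounded domain, f ∈ L^∞(Ω), and let S ⊂⊂ Ω × ℝ be an open convex set with S ∩ {z=0} ≠ ∅. Let U : Ω × ℝ → ℝ be continuous and symmetric across {z=0}, such that the one-sided derivative ∂_{z+}U(x,0) = lim_{z→0⁺}(U(x,z) - U(x,0))/z exists for every x ∈ Ω, and assume -∂_{z+}U(x,0) ≥ f(x) for all (x,0) ∈ S ∩ {z=0}. Let (x₀,0) ∈ S ∩ {z=0}. Then: (i) if f(x₀) > 0, no paraboloid can touch U from below at (x₀,0) in S; (ii) if f(x₀) ≤ 0 and a paraboloid P of opening a > 0 with vertex (x_v,z_v) touches U from below at (x₀,0) in S, then |h'(z_v)| ≤ |f(x₀)|/a; in particular, if f(x₀) = 0 then z_v = 0. -/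
open Set MeasureTheory
open scoped ENNReal

noncomputable section

private lemma hFun_deriv_Ici {s : ℝ} (hs0 : 0 < s) (hs1 : s < 1) :
    HasDerivWithinAt (hFun s) 0 (Ici 0) 0 := by
  have hp : 1 < 1 / s := by rw [lt_div_iff₀ hs0]; linarith
  have h1 : HasDerivAt (fun z : ℝ => z ^ (1 / s)) (1 / s * (0 : ℝ) ^ (1 / s - 1)) 0 :=
    (Real.hasStrictDerivAt_rpow_const (Or.inr hp.le)).hasDerivAt
  rw [Real.zero_rpow (by linarith : 1 / s - 1 ≠ 0), mul_zero] at h1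
  have h2 := (h1.hasDerivWithinAt (s := Ici 0)).const_mul (s ^ 2 / (1 - s))
  rw [mul_zero] at h2
  exact h2.congr (fun z hz => by simp [hFun, abs_of_nonneg (mem_Ici.mp hz)])
    (by simp [hFun, Real.zero_rpow (by positivity : (1:ℝ)/s ≠ 0)])

private lemma hFun_deriv_Iic {s : ℝ} (hs0 : 0 < s) (hs1 : s < 1) :
    HasDerivWithinAt (hFun s) 0 (Iic 0) 0 := by
  have hp : 1 < 1 / s := by rw [lt_div_iff₀ hs0]; linarith
  have h1 : HasDerivAt (fun z : ℝ => z ^ (1 / s)) (1 / s * (0 : ℝ) ^ (1 / s - 1)) 0 :=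
    (Real.hasStrictDerivAt_rpow_const (Or.inr hp.le)).hasDerivAt
  rw [Real.zero_rpow (by linarith : 1 / s - 1 ≠ 0), mul_zero] at h1
  have hneg : HasDerivAt (fun z : ℝ => -z) (-1 : ℝ) (0 : ℝ) := (hasDerivAt_neg 0)
  have h1' : HasDerivAt (fun z : ℝ => z ^ (1 / s)) 0 (-0 : ℝ) := by simpa using h1
  have h2 : HasDerivAt (fun z : ℝ => (-z) ^ (1 / s)) (0 * (-1)) 0 := h1'.comp (0 : ℝ) hneg
  have h3 := (h2.hasDerivWithinAt (s := Iic 0)).const_mul (s ^ 2 / (1 - s))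
  rw [zero_mul, mul_zero] at h3
  exact h3.congr (fun z hz => by simp [hFun, abs_of_nonpos (mem_Iic.mp hz)])
    (by simp [hFun, Real.zero_rpow (by positivity : (1:ℝ)/s ≠ 0)])

/-- Lemma 6.5: at points of the Neumann boundary `{z=0}`, if
`-∂_{z+}U ≥ f` then no paraboloid can touch `U` from below where `f > 0`; where `f ≤ 0`
the vertex of a touching paraboloid satisfies `|h'(z_v)| ≤ |f(x₀)|/a`. -/
theorem vertices_on_neumann_boundary
    (n : ℕ) (hn : 1 ≤ n) (s : ℝ) (hs0 : 0 < s) (hs1 : s < 1)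
    (Ω : Set (Fin n → ℝ)) (hΩo : IsOpen Ω) (hΩc : IsConnected Ω)
    (hΩb : Bornology.IsBounded Ω)
    (f : (Fin n → ℝ) → ℝ)
    (S : Set ((Fin n → ℝ) × ℝ)) (hSo : IsOpen S) (hSc : Convex ℝ S)
    (hSb : Bornology.IsBounded S)
    (hSsub : closure S ⊆ Ω ×ˢ (univ : Set ℝ))
    (hSz : (S ∩ {p : (Fin n → ℝ) × ℝ | p.2 = 0}).Nonempty)
    (U : (Fin n → ℝ) × ℝ → ℝ)
    (hUc : ContinuousOn U (Ω ×ˢ (univ : Set ℝ)))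
    (hUsym : ∀ (x : Fin n → ℝ) (z : ℝ), x ∈ Ω → U (x, -z) = U (x, z))
    (V : (Fin n → ℝ) → ℝ)
    (hV : ∀ x ∈ Ω, HasDerivWithinAt (fun w => U (x, w)) (V x) (Ici (0 : ℝ)) 0)
    (hNeu : ∀ x : Fin n → ℝ, (x, (0 : ℝ)) ∈ S → f x ≤ -V x)
    (x₀ : Fin n → ℝ) (h₀ : (x₀, (0 : ℝ)) ∈ S) :
    (0 < f x₀ →
      ¬ ∃ (a : ℝ) (v : (Fin n → ℝ) × ℝ) (P : (Fin n → ℝ) × ℝ → ℝ),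
        0 < a ∧ IsParaboloid n s a v P ∧ TouchesBelow n P U S (x₀, 0)) ∧
    (f x₀ ≤ 0 →
      ∀ (a : ℝ) (xv : Fin n → ℝ) (zv : ℝ) (P : (Fin n → ℝ) × ℝ → ℝ), 0 < a →
        IsParaboloid n s a (xv, zv) P → TouchesBelow n P U S (x₀, 0) →
        |hDeriv s zv| ≤ |f x₀| / a ∧ (f x₀ = 0 → zv = 0)) := by
  have hx₀Ω : x₀ ∈ Ω := (hSsub (subset_closure h₀)).1
  have hfneg := hNeu x₀ h₀
  have key : ∀ (a : ℝ) (xv : Fin n → ℝ) (zv : ℝ) (P : (Fin n → ℝ) × ℝ → ℝ), 0 < a →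
      IsParaboloid n s a (xv, zv) P → TouchesBelow n P U S (x₀, 0) →
      f x₀ ≤ a * hDeriv s zv ∧ a * hDeriv s zv ≤ -f x₀ := by
    intro a xv zv P ha hpar htb
    obtain ⟨c, hP⟩ := hpar
    obtain ⟨htouch, hbelow⟩ := htb
    set g : ℝ → ℝ := fun z => U (x₀, z) - P (x₀, z) with hgdef
    have hg0 : g 0 = 0 := by simp [hgdef, htouch]
    have hT : {z : ℝ | (x₀, z) ∈ S} ∈ nhds (0 : ℝ) := by
      have hcont : Continuous fun z : ℝ => ((x₀, z) : (Fin n → ℝ) × ℝ) :=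
        Continuous.prodMk_right x₀
      exact (hSo.preimage hcont).mem_nhds h₀
    have hgnn : ∀ᶠ z in nhds (0 : ℝ), 0 ≤ g z := by
      filter_upwards [hT] with z hz
      exact sub_nonneg.mpr (hbelow _ hz)
    have hPder : ∀ Tset : Set ℝ, HasDerivWithinAt (hFun s) 0 Tset 0 →
        HasDerivWithinAt (fun z => P (x₀, z)) (a * hDeriv s zv) Tset 0 := by
      intro Tset hH
      have h1 : HasDerivWithinAt
          (fun z : ℝ => -a * (deltaE n xv x₀ +
            (hFun s z - hFun s zv - hDeriv s zv * (z - zv))) + c)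
          (-a * (0 - hDeriv s zv * 1)) Tset 0 := by
        exact (((((hH.sub_const (hFun s zv)).sub
          (((hasDerivWithinAt_id (0 : ℝ) Tset).sub_const zv).const_mul
            (hDeriv s zv)))).const_add (deltaE n xv x₀)).const_mul (-a)).add_const c
      have h2 : HasDerivWithinAt (fun z => P (x₀, z)) (-a * (0 - hDeriv s zv * 1)) Tset 0 :=
        h1.congr (fun z _ => by simp [hP, deltaPhi, deltaH]) (by simp [hP, deltaPhi, deltaH])
      convert h2 using 1
      ring
    have hUR : HasDerivWithinAt (fun w => U (x₀, w)) (V x₀) (Ici 0) 0 := hV x₀ hx₀Ω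
    have hUL : HasDerivWithinAt (fun w => U (x₀, w)) (-(V x₀)) (Iic 0) 0 := by
      have hneg : HasDerivWithinAt (fun w : ℝ => -w) (-1 : ℝ) (Iic 0) 0 :=
        (hasDerivAt_neg (0 : ℝ)).hasDerivWithinAt
      have hmaps : Set.MapsTo (fun w : ℝ => -w) (Iic 0) (Ici 0) := fun w hw => by
        simpa using hw
      have hUR' : HasDerivWithinAt (fun w => U (x₀, w)) (V x₀) (Ici 0)
          ((fun w : ℝ => -w) 0) := by simpa using hUR
      have hcomp := hUR'.comp (0 : ℝ) hneg hmaps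
      have := hcomp.congr (fun w _ => (hUsym x₀ w hx₀Ω).symm)
        (by simp [Function.comp])
      simpa using this
    have gR : HasDerivWithinAt g (V x₀ - a * hDeriv s zv) (Ici 0) 0 :=
      hUR.sub (hPder (Ici 0) (hFun_deriv_Ici hs0 hs1))
    have gL : HasDerivWithinAt g (-(V x₀) - a * hDeriv s zv) (Iic 0) 0 :=
      hUL.sub (hPder (Iic 0) (hFun_deriv_Iic hs0 hs1))
    have hdR : 0 ≤ V x₀ - a * hDeriv s zv := by
      have hslope := hasDerivWithinAt_iff_tendsto_slope.mp gR
      rw [Ici_sdiff_left] at hslope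
      refine ge_of_tendsto hslope ?_
      have h1 : ∀ᶠ z in nhdsWithin (0 : ℝ) (Ioi 0), 0 ≤ g z :=
        hgnn.filter_mono nhdsWithin_le_nhds
      filter_upwards [h1, self_mem_nhdsWithin] with z hz hzmem
      have hz0 : (0 : ℝ) < z := hzmem
      rw [slope_def_field, hg0, sub_zero, sub_zero]
      exact div_nonneg hz hz0.le
    have hdL : -(V x₀) - a * hDeriv s zv ≤ 0 := by
      have hslope := hasDerivWithinAt_iff_tendsto_slope.mp gL
      rw [Iic_diff_right] at hslope
      refine le_of_tendsto hslope ?_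
      have h1 : ∀ᶠ z in nhdsWithin (0 : ℝ) (Iio 0), 0 ≤ g z :=
        hgnn.filter_mono nhdsWithin_le_nhds
      filter_upwards [h1, self_mem_nhdsWithin] with z hz hzmem
      have hz0 : z < (0 : ℝ) := hzmem
      rw [slope_def_field, hg0, sub_zero, sub_zero]
      exact div_nonpos_of_nonneg_of_nonpos hz hz0.le
    constructor
    · linarith
    · linarith
  constructor
  · rintro hf ⟨a, ⟨xv, zv⟩, P, ha, hpar, htb⟩
    obtain ⟨k1, k2⟩ := key a xv zv P ha hpar htb
    linarith
  · intro hf a xv zv P ha hpar htb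
    obtain ⟨k1, k2⟩ := key a xv zv P ha hpar htb
    have habs : |f x₀| = -f x₀ := abs_of_nonpos hf
    constructor
    · rw [abs_le, habs]
      constructor
      · have heq : -(-f x₀ / a) = f x₀ / a := by ring
        rw [heq, div_le_iff₀ ha, mul_comm]
        linarith
      · rw [le_div_iff₀ ha, mul_comm]
        linarith
    · intro hf0
      rw [hf0] at k1 k2
      have hd0 : hDeriv s zv = 0 := by nlinarith
      by_contra hzv
      have h1 : (0 : ℝ) < s / (1 - s) := div_pos hs0 (by linarith)
      have h2 : 0 < |zv| ^ (1 / s - 2) := Real.rpow_pos_of_pos (abs_pos.mpr hzv) _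
      exact mul_ne_zero (mul_ne_zero h1.ne' h2.ne') hzv hd0
end
end
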